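/- arXiv:1210.1502 — 9 statements merged into one kernel-verified Lean document; each statement's English description precedes it below -/
import Mathlib

section
/- Let K be a field, R = K[x_1,...,x_m] a polynomial ring, and let f ∈ K[x_1,...,x_{m}] be a polynomial not involving the variable x_i (for some fixed i). Let I = (x_i, f) be the ideal generated by x_i and f, and let a ≥ 0 be a natural number. Write a polynomial P ∈ R as P = Σ_{k≥0} P_k x_i^k where each P_k does not involve x_i. Then P ∈ I^a if and only if f^{a-k} divides P_k (in the subring of polynomials not involving x_i) for all 0 ≤ k ≤ a. -/
open MvPolynomial

/-!
Writing `K[x_1, …, x_m] = A[X]` with `A` the polynomials in the variables other than `x_i`, the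
ideal `(x_i, f)` becomes `(X, C c)` with `c ∈ A`. Membership of `p ∈ A[X]` in `(X, C c)^a` is
then the coefficientwise condition `c^(a-k) ∣ p_k`: these conditions cut out an ideal `J_a`
containing `X` and `C c`, with `J_a * J_b ≤ J_(a+b)`, so `(X, C c)^a ≤ J_a`; conversely, an
element of `J_a` is `∑_{k<a} c^(a-k) q_k X^k + X^a q`, visibly in `(X, C c)^a`.
-/

namespace Polynomial

variable {S : Type*} [CommRing S]

def coeffPowDvdIdeal (c : S) (a : ℕ) : Ideal S[X] where
  carrier := {p | ∀ k, c ^ (a - k) ∣ p.coeff k}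
  zero_mem' k := by simp
  add_mem' hp hq k := by simpa only [coeff_add] using dvd_add (hp k) (hq k)
  smul_mem' q p hp k := by
    rw [smul_eq_mul, coeff_mul]
    refine Finset.dvd_sum fun x hx => dvd_mul_of_dvd_right ((pow_dvd_pow c ?_).trans (hp x.2)) _
    rw [Finset.HasAntidiagonal.mem_antidiagonal] at hx
    omega

theorem coeffPowDvdIdeal_mul_le (c : S) (a b : ℕ) :
    coeffPowDvdIdeal c a * coeffPowDvdIdeal c b ≤ coeffPowDvdIdeal c (a + b) := by
  refine Ideal.mul_le.mpr fun p hp q hq k => ?_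
  rw [coeff_mul]
  refine Finset.dvd_sum fun x hx => ?_
  rw [Finset.HasAntidiagonal.mem_antidiagonal] at hx
  calc c ^ (a + b - k) ∣ c ^ (a - x.1) * c ^ (b - x.2) := by
        rw [← pow_add]; exact pow_dvd_pow c (by omega)
    _ ∣ p.coeff x.1 * q.coeff x.2 := mul_dvd_mul (hp x.1) (hq x.2)

theorem span_X_C_le_coeffPowDvdIdeal_one (c : S) :
    Ideal.span {X, C c} ≤ coeffPowDvdIdeal c 1 := by
  rw [Ideal.span_le, Set.insert_subset_iff, Set.singleton_subset_iff]
  refine ⟨fun k => ?_, fun k => ?_⟩ <;> rcases k with _ | k <;> simp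

theorem span_X_C_pow_le_coeffPowDvdIdeal (c : S) (a : ℕ) :
    Ideal.span {X, C c} ^ a ≤ coeffPowDvdIdeal c a := by
  induction a with
  | zero => rw [pow_zero, Ideal.one_eq_top]; exact fun p _ k => by simp
  | succ a ih =>
    rw [pow_succ]
    exact (Ideal.mul_mono ih (span_X_C_le_coeffPowDvdIdeal_one c)).trans
      (coeffPowDvdIdeal_mul_le c a 1)

theorem coeffPowDvdIdeal_le_span_X_C_pow (c : S) (a : ℕ) :
    coeffPowDvdIdeal c a ≤ Ideal.span {X, C c} ^ a := by
  intro p hp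
  have hX : X ∈ Ideal.span {X, C c} := Ideal.subset_span (by simp)
  have hC : C c ∈ Ideal.span {X, C c} := Ideal.subset_span (by simp)
  obtain ⟨q, hq⟩ : X ^ a ∣ p - ∑ k ∈ Finset.range a, C (p.coeff k) * X ^ k := by
    rw [X_pow_dvd_iff]
    intro d hd
    simp [finsetSum_coeff, hd]
  rw [sub_eq_iff_eq_add'.mp hq]
  refine Ideal.add_mem _ (Ideal.sum_mem _ fun k hk => ?_)
    (Ideal.mul_mem_right _ _ (Ideal.pow_mem_pow hX a))
  obtain ⟨s, hs⟩ := hp k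
  have hk : k + (a - k) = a := by rw [Finset.mem_range] at hk; omega
  have hmonomial : C c ^ (a - k) * X ^ k ∈ Ideal.span {X, C c} ^ a := by
    simpa only [← pow_add, hk, mul_comm] using
      Ideal.mul_mem_mul (Ideal.pow_mem_pow hX k) (Ideal.pow_mem_pow hC (a - k))
  rw [hs, C_mul, C_pow, mul_comm _ (C s), mul_assoc]
  exact Ideal.mul_mem_left _ _ hmonomial

theorem mem_span_X_C_pow_iff {c : S} {a : ℕ} {p : S[X]} :
    p ∈ Ideal.span {X, C c} ^ a ↔ ∀ k, c ^ (a - k) ∣ p.coeff k :=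
  ⟨fun h => span_X_C_pow_le_coeffPowDvdIdeal c a h,
    fun h => coeffPowDvdIdeal_le_span_X_C_pow c a h⟩

theorem coeff_sum_range_C_mul_X_pow {s : ℕ → S} {N : ℕ} (hs : ∀ k, N ≤ k → s k = 0) (k : ℕ) :
    (∑ j ∈ Finset.range N, C (s j) * X ^ j).coeff k = s k := by
  simp only [finsetSum_coeff, coeff_C_mul_X_pow, Finset.sum_ite_eq, Finset.mem_range]
  exact ite_eq_left_iff.mpr fun hk => (hs k (not_lt.mp hk)).symm

end Polynomial

namespace MvPolynomial

variable {R : Type*} [CommRing R] {σ : Type*} (i : σ)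

theorem mem_supported_compl_singleton_iff {g : MvPolynomial σ R} :
    g ∈ supported R ({i}ᶜ : Set σ) ↔
      ∃ p : MvPolynomial {j // j ≠ i} R, rename Subtype.val p = g := by
  rw [supported_eq_range_rename, AlgHom.mem_range]
  rfl

theorem exists_mem_supported_compl_singleton_rename_eq_mul_iff
    {p q : MvPolynomial {j // j ≠ i} R} :
    (∃ Q ∈ supported R ({i}ᶜ : Set σ), rename Subtype.val p = rename Subtype.val q * Q) ↔
      q ∣ p := by
  simp only [mem_supported_compl_singleton_iff, exists_exists_eq_and, ← map_mul,
    (rename_injective _ Subtype.val_injective).eq_iff]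
  rfl

variable (R) [DecidableEq σ]

noncomputable def univariateEquiv :
    MvPolynomial σ R ≃ₐ[R] Polynomial (MvPolynomial {j // j ≠ i} R) :=
  (renameEquiv R (Equiv.optionSubtypeNe i).symm).trans (optionEquivLeft R _)

variable {R}

@[simp]
theorem univariateEquiv_X_self : univariateEquiv R i (X i) = Polynomial.X := by
  simp [univariateEquiv, optionEquivLeft_X_none]

@[simp]
theorem univariateEquiv_rename_val (p : MvPolynomial {j // j ≠ i} R) :
    univariateEquiv R i (rename Subtype.val p) = Polynomial.C p := by
  induction p using MvPolynomial.induction_on with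
  | C r => simp [univariateEquiv, optionEquivLeft_C]
  | add p q hp hq => rw [map_add, map_add, hp, hq, Polynomial.C_add]
  | mul_X p j hp =>
    rw [map_mul, map_mul, hp, rename_X, Polynomial.C_mul]
    simp [univariateEquiv, Equiv.optionSubtypeNe_symm_of_ne j.2, optionEquivLeft_X_some]

theorem mem_span_X_rename_pow_iff {c : MvPolynomial {j // j ≠ i} R} {a : ℕ}
    {P : MvPolynomial σ R} :
    P ∈ Ideal.span {X i, rename Subtype.val c} ^ a ↔
      ∀ k, c ^ (a - k) ∣ (univariateEquiv R i P).coeff k := by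
  have hmap : (Ideal.span {X i, rename Subtype.val c}).map (univariateEquiv R i).toRingEquiv =
      Ideal.span {Polynomial.X, Polynomial.C c} := by
    rw [Ideal.map_span, Set.image_pair]
    simp
  rw [← Ideal.apply_mem_of_equiv_iff (f := (univariateEquiv R i).toRingEquiv), Ideal.map_pow,
    hmap, Polynomial.mem_span_X_C_pow_iff]
  rfl

end MvPolynomial

/-- Membership in powers of the ideal `(x_i, f)` in terms of the expansion of `P`
in powers of `x_i` with coefficients not involving `x_i`. -/
theorem stmt_0 {K : Type*} [Field K] {m : ℕ} (i : Fin m)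
    (f : MvPolynomial (Fin m) K) (hf : f ∈ supported K ({i}ᶜ : Set (Fin m)))
    (a : ℕ) (P : MvPolynomial (Fin m) K) (Pk : ℕ → MvPolynomial (Fin m) K)
    (hPk : ∀ k, Pk k ∈ supported K ({i}ᶜ : Set (Fin m)))
    (N : ℕ) (hPkN : ∀ k, N ≤ k → Pk k = 0)
    (hP : P = ∑ k ∈ Finset.range N, Pk k * X i ^ k) :
    P ∈ (Ideal.span {X i, f}) ^ a ↔
      ∀ k ≤ a, ∃ Q ∈ supported K ({i}ᶜ : Set (Fin m)), Pk k = f ^ (a - k) * Q := by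
  obtain ⟨c, rfl⟩ := (mem_supported_compl_singleton_iff i).mp hf
  choose s hs using fun k => (mem_supported_compl_singleton_iff i).mp (hPk k)
  have hsN : ∀ k, N ≤ k → s k = 0 := fun k hk =>
    rename_injective _ Subtype.val_injective (by rw [hs, hPkN k hk, map_zero])
  have hcoeff : ∀ k, (univariateEquiv K i P).coeff k = s k := by
    simpa only [hP, ← hs, map_sum, map_mul, map_pow, univariateEquiv_rename_val,
      univariateEquiv_X_self] using Polynomial.coeff_sum_range_C_mul_X_pow hsN
  simp only [mem_span_X_rename_pow_iff, hcoeff, ← hs, ← map_pow,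
    exists_mem_supported_compl_singleton_rename_eq_mul_iff]
  refine ⟨fun h k _ => h k, fun h k => ?_⟩
  rcases le_or_gt k a with hk | hk
  · exact h k hk
  · simp [Nat.sub_eq_zero_of_le hk.le]
end

section
/- Let K be a field, R = K[x_1,...,x_m], and let f be an irreducible polynomial not involving the variable x_i. Let I = (x_i, f). If P, Q ∈ R satisfy PQ ∈ I^a for some natural number a ≥ 1, then there exists 0 ≤ b ≤ a such that P ∈ I^b and Q ∈ I^{a-b}. -/
/-!
Write `R = S[x_i]` with `S` the polynomial ring in the other variables; then `f` is a constant
`g ∈ S`, prime because `f` is. The substitution `x_i ↦ g x_i` multiplies the coefficient of `x_i^n`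
by `g^n`, so it detects the powers of `I = (x_i, g)`: `p ∈ I^b` iff `g^b ∣ p(g x_i)`. Hence
`PQ ∈ I^a` says `g^a ∣ P(g x_i) Q(g x_i)`, and a power of a prime dividing a product splits
between the factors.
-/

open MvPolynomial

theorem Prime.exists_pow_dvd_and_pow_dvd_of_pow_dvd_mul {M : Type*} [CommMonoidWithZero M]
    [IsCancelMulZero M] {p : M} (hp : Prime p) {n : ℕ} {x y : M} (h : p ^ n ∣ x * y) :
    ∃ b ≤ n, p ^ b ∣ x ∧ p ^ (n - b) ∣ y := by
  induction n generalizing x y with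
  | zero => exact ⟨0, le_rfl, by simp, by simp⟩
  | succ n ih =>
    rcases hp.dvd_or_dvd ((dvd_pow_self p n.succ_ne_zero).trans h) with ⟨x, rfl⟩ | ⟨y, rfl⟩
    · rw [pow_succ', mul_assoc, mul_dvd_mul_iff_left hp.ne_zero] at h
      obtain ⟨b, hb, hx, hy⟩ := ih h
      exact ⟨b + 1, by omega, by rw [pow_succ']; exact mul_dvd_mul_left p hx, by simpa using hy⟩
    · rw [pow_succ', mul_left_comm, mul_dvd_mul_iff_left hp.ne_zero] at h
      obtain ⟨b, hb, hx, hy⟩ := ih h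
      refine ⟨b, by omega, hx, ?_⟩
      rw [Nat.sub_add_comm hb, pow_succ']
      exact mul_dvd_mul_left p hy

namespace Polynomial

section Semiring

variable {S : Type*} [CommSemiring S]

theorem coeff_aeval_C_mul_X (g : S) (p : S[X]) (n : ℕ) :
    (aeval (C g * X) p).coeff n = g ^ n * p.coeff n := by
  induction p using Polynomial.induction_on' with
  | add p q hp hq => simp [hp, hq, mul_add]
  | monomial k c =>
    simp only [aeval_monomial, mul_pow, algebraMap_eq, ← C_pow, ← mul_assoc, ← C_mul,
      coeff_C_mul_X_pow, coeff_monomial]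
    rcases eq_or_ne k n with rfl | h
    · simp [mul_comm]
    · simp [h, h.symm]

theorem C_pow_dvd_aeval_C_mul_X_of_mem_pow {g : S} {b : ℕ} {p : S[X]}
    (hp : p ∈ Ideal.span {X, C g} ^ b) : C g ^ b ∣ aeval (C g * X) p := by
  have hmap : (Ideal.span {X, C g}).map (aeval (C g * X)) ≤ Ideal.span {C g} := by
    rw [Ideal.map_span, Ideal.span_le, Set.image_pair, Set.pair_subset_iff]
    simp only [aeval_X, aeval_C, algebraMap_eq, SetLike.mem_coe, Ideal.mem_span_singleton]
    exact ⟨dvd_mul_right _ _, dvd_rfl⟩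
  have hp' := Ideal.mem_map_of_mem (aeval (C g * X)) hp
  rw [Ideal.map_pow] at hp'
  rw [← Ideal.mem_span_singleton, ← Ideal.span_singleton_pow]
  exact Ideal.pow_right_mono hmap b hp'

theorem monomial_mem_span_X_C_pow {g c : S} {b n : ℕ} (h : g ^ (b - n) ∣ c) :
    monomial n c ∈ Ideal.span {X, C g} ^ b := by
  obtain ⟨c, rfl⟩ := h
  have hX : X ∈ Ideal.span {X, C g} := Ideal.subset_span (Set.mem_insert _ _)
  have hC : C g ∈ Ideal.span {X, C g} := Ideal.subset_span (Set.mem_insert_of_mem _ rfl)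
  have hmem : C g ^ (b - n) * X ^ n ∈ Ideal.span {X, C g} ^ b :=
    Ideal.pow_le_pow_right (show b ≤ b - n + n by omega) (pow_add (Ideal.span {X, C g}) _ n ▸
      Ideal.mul_mem_mul (Ideal.pow_mem_pow hC _) (Ideal.pow_mem_pow hX n))
  rw [← C_mul_X_pow_eq_monomial, C_mul, C_pow, mul_comm (C _ ^ _), mul_assoc]
  exact Ideal.mul_mem_left _ _ hmem

theorem mem_span_X_C_pow_of_C_pow_dvd_aeval_C_mul_X [IsDomain S] {g : S} (hg : g ≠ 0) {b : ℕ}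
    {p : S[X]} (h : C g ^ b ∣ aeval (C g * X) p) : p ∈ Ideal.span {X, C g} ^ b := by
  rw [← C_pow, C_dvd_iff_dvd_coeff] at h
  rw [← p.sum_monomial_eq]
  refine Ideal.sum_mem _ fun n _ ↦ monomial_mem_span_X_C_pow ?_
  have hn := h n
  rw [coeff_aeval_C_mul_X] at hn
  rcases le_total b n with hbn | hnb
  · simp [Nat.sub_eq_zero_of_le hbn]
  · rwa [← Nat.add_sub_cancel' hnb, pow_add, mul_dvd_mul_iff_left (pow_ne_zero n hg)] at hn

theorem mem_span_X_C_pow_iff_s1 [IsDomain S] {g : S} (hg : g ≠ 0) {b : ℕ} {p : S[X]} :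
    p ∈ Ideal.span {X, C g} ^ b ↔ C g ^ b ∣ aeval (C g * X) p :=
  ⟨C_pow_dvd_aeval_C_mul_X_of_mem_pow, mem_span_X_C_pow_of_C_pow_dvd_aeval_C_mul_X hg⟩

end Semiring

theorem exists_mem_span_X_C_pow_of_mul_mem {S : Type*} [CommRing S] [IsDomain S] {g : S}
    (hg : Prime g) {a : ℕ} {p q : S[X]} (h : p * q ∈ Ideal.span {X, C g} ^ a) :
    ∃ b ≤ a, p ∈ Ideal.span {X, C g} ^ b ∧ q ∈ Ideal.span {X, C g} ^ (a - b) := by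
  simp only [mem_span_X_C_pow_iff_s1 hg.ne_zero, map_mul] at h ⊢
  exact (prime_C_iff.mpr hg).exists_pow_dvd_and_pow_dvd_of_pow_dvd_mul h

end Polynomial

namespace MvPolynomial

variable (R : Type*) [CommSemiring R] {σ : Type*} [DecidableEq σ] (i : σ)

noncomputable def equivPolynomialAt :
    MvPolynomial σ R ≃ₐ[R] Polynomial (MvPolynomial {j // j ≠ i} R) :=
  (renameEquiv R (Equiv.optionSubtypeNe i).symm).trans (optionEquivLeft R _)

theorem equivPolynomialAt_X_self : equivPolynomialAt R i (X i) = Polynomial.X := by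
  simp [equivPolynomialAt, optionEquivLeft_X_none]

theorem equivPolynomialAt_rename_subtypeVal (g : MvPolynomial {j // j ≠ i} R) :
    equivPolynomialAt R i (rename Subtype.val g) = Polynomial.C g := by
  have : (equivPolynomialAt R i).toAlgHom.comp (rename Subtype.val) = Polynomial.CAlgHom := by
    ext j
    simp [equivPolynomialAt, Equiv.optionSubtypeNe_symm_of_ne j.2, optionEquivLeft_X_some]
  exact DFunLike.congr_fun this g

theorem exists_equivPolynomialAt_eq_C_of_mem_supported {f : MvPolynomial σ R}
    (hf : f ∈ supported R {i}ᶜ) : ∃ g, equivPolynomialAt R i f = Polynomial.C g := by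
  obtain ⟨g, rfl⟩ := exists_rename_eq_of_vars_subset_range f Subtype.val Subtype.val_injective
    fun j hj ↦ ⟨⟨j, mem_supported.mp hf hj⟩, rfl⟩
  exact ⟨g, equivPolynomialAt_rename_subtypeVal R i g⟩

end MvPolynomial

theorem stmt_1_general {K : Type*} [Field K] {m : ℕ} (i : Fin m)
    (f : MvPolynomial (Fin m) K) (hf : f ∈ supported K ({i}ᶜ : Set (Fin m)))
    (hirr : Irreducible f) (a : ℕ)
    (P Q : MvPolynomial (Fin m) K)
    (hPQ : P * Q ∈ (Ideal.span {X i, f}) ^ a) :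
    ∃ b ≤ a, P ∈ (Ideal.span {X i, f}) ^ b ∧ Q ∈ (Ideal.span {X i, f}) ^ (a - b) := by
  let Φ := (equivPolynomialAt K i).toRingEquiv
  obtain ⟨g, hfg⟩ := exists_equivPolynomialAt_eq_C_of_mem_supported K i hf
  have hg : Prime g := by
    rw [← Polynomial.prime_C_iff, ← hfg]
    exact (MulEquiv.prime_iff Φ.toMulEquiv).mpr hirr.prime
  have hmap : (Ideal.span {X i, f}).map Φ = Ideal.span {Polynomial.X, Polynomial.C g} := by
    rw [Ideal.map_span, Set.image_pair]
    exact congr_arg₂ (fun x y ↦ Ideal.span {x, y}) (equivPolynomialAt_X_self K i) hfg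
  have hmem (b : ℕ) (x : MvPolynomial (Fin m) K) :
      x ∈ Ideal.span {X i, f} ^ b ↔ Φ x ∈ Ideal.span {Polynomial.X, Polynomial.C g} ^ b := by
    rw [← hmap, ← Ideal.map_pow, Ideal.apply_mem_of_equiv_iff]
  rw [hmem, map_mul] at hPQ
  obtain ⟨b, hb, hP, hQ⟩ := Polynomial.exists_mem_span_X_C_pow_of_mul_mem hg hPQ
  exact ⟨b, hb, (hmem b P).2 hP, (hmem _ Q).2 hQ⟩

/-- If `PQ ∈ (x_i, f)^a` with `f` irreducible and not involving `x_i`, then the power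
splits between the factors. -/
theorem stmt_1 {K : Type*} [Field K] {m : ℕ} (i : Fin m)
    (f : MvPolynomial (Fin m) K) (hf : f ∈ supported K ({i}ᶜ : Set (Fin m)))
    (hirr : Irreducible f) (a : ℕ) (ha : 1 ≤ a)
    (P Q : MvPolynomial (Fin m) K)
    (hPQ : P * Q ∈ (Ideal.span {X i, f}) ^ a) :
    ∃ b ≤ a, P ∈ (Ideal.span {X i, f}) ^ b ∧ Q ∈ (Ideal.span {X i, f}) ^ (a - b) :=
  stmt_1_general i f hf hirr a P Q hPQ
end

section
/- Let K be a field, R = K[x_1,...,x_m], and let f be an irreducible polynomial not involving the variable x_i. Then for every natural number a ≥ 1, the ideal I^a, where I = (x_i, f), is a primary ideal, and its radical equals I. -/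
open MvPolynomial

/-!
Write `R = S[x_i]` with `S` the polynomial ring in the other variables, so that `f` is a prime
constant of `S`. Substituting `f x_i` for `x_i` multiplies the `j`-th coefficient by `f ^ j`, hence
`p ∈ (x_i, f) ^ a` iff `f ^ a` divides `p(f x_i)`: the ideal `(x_i, f) ^ a` is the preimage of
`(f) ^ a`, which is primary with radical `(f)`, under a ring endomorphism.
-/

theorem Ideal.isPrimary_span_singleton_pow {S : Type*} [CommRing S] [IsDomain S] {q : S}
    (hq : Prime q) {a : ℕ} (ha : a ≠ 0) : (Ideal.span {q} ^ a).IsPrimary := by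
  have hprime : (Ideal.span {q}).IsPrime := (Ideal.span_singleton_prime hq.ne_zero).mpr hq
  refine Ideal.isPrimary_iff.mpr ⟨fun htop => hprime.ne_top ?_, fun {x y} hxy => ?_⟩
  · exact top_le_iff.mp (htop ▸ Ideal.pow_le_self ha)
  · rw [Ideal.radical_pow _ ha, hprime.radical, Ideal.mem_span_singleton]
    rw [Ideal.span_singleton_pow, Ideal.mem_span_singleton] at hxy ⊢
    by_cases hy : q ∣ y
    · exact Or.inr hy
    · exact Or.inl (hq.pow_dvd_of_dvd_mul_right a hy hxy)

namespace Polynomial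

variable {S : Type*} [CommRing S]

theorem C_mul_X_pow_mem_span_X_C_pow {f r : S} {a n : ℕ} (h : f ^ (a - n) ∣ r) :
    C r * X ^ n ∈ Ideal.span {X, C f} ^ a := by
  obtain ⟨c, rfl⟩ := h
  have hC : C (f ^ (a - n) * c) ∈ Ideal.span {X, C f} ^ (a - n) := by
    rw [mul_comm, C_mul, C_pow]
    exact Ideal.mul_mem_left _ _ (Ideal.pow_mem_pow (Ideal.subset_span (by simp)) _)
  have hX : (X : S[X]) ^ n ∈ Ideal.span {X, C f} ^ n :=
    Ideal.pow_mem_pow (Ideal.subset_span (by simp)) _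
  refine Ideal.pow_le_pow_right (by omega : a ≤ a - n + n) ?_
  rw [pow_add]
  exact Ideal.mul_mem_mul hC hX

variable [IsDomain S] {f : S}

theorem span_X_C_pow_eq_comap (hf : f ≠ 0) (a : ℕ) :
    Ideal.span {X, C f} ^ a = (Ideal.span {C f} ^ a).comap (compRingHom (C f * X)) := by
  refine le_antisymm ?_ fun p hp => ?_
  · rw [← Ideal.map_le_iff_le_comap, Ideal.map_pow]
    refine Ideal.pow_right_mono ?_ a
    rw [Ideal.map_span, Set.image_pair, Ideal.span_le]
    rintro _ (rfl | rfl) <;> simp [Ideal.mem_span_singleton]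
  rw [Ideal.mem_comap, Ideal.span_singleton_pow, ← C_pow, Ideal.mem_span_singleton,
    C_dvd_iff_dvd_coeff] at hp
  rw [as_sum_range_C_mul_X_pow p]
  refine Ideal.sum_mem _ fun n _ => C_mul_X_pow_mem_span_X_C_pow ?_
  have hn := hp n
  simp only [coe_compRingHom_apply, comp_C_mul_X_coeff] at hn
  rcases le_or_gt n a with hna | hna
  · rw [← Nat.sub_add_cancel hna, pow_add] at hn
    exact (mul_dvd_mul_iff_right (pow_ne_zero n hf)).mp hn
  · simp [Nat.sub_eq_zero_of_le hna.le]

theorem isPrimary_span_X_C_pow (hf : Prime f) {a : ℕ} (ha : a ≠ 0) :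
    (Ideal.span {X, C f} ^ a).IsPrimary := by
  rw [span_X_C_pow_eq_comap hf.ne_zero]
  exact (Ideal.isPrimary_span_singleton_pow (prime_C_iff.mpr hf) ha).comap _

theorem radical_span_X_C_pow (hf : Prime f) {a : ℕ} (ha : a ≠ 0) :
    (Ideal.span {X, C f} ^ a).radical = Ideal.span {X, C f} := by
  have hC : Prime (C f) := prime_C_iff.mpr hf
  rw [span_X_C_pow_eq_comap hf.ne_zero, ← Ideal.comap_radical, Ideal.radical_pow _ ha,
    ((Ideal.span_singleton_prime hC.ne_zero).mpr hC).radical, ← pow_one (Ideal.span {C f}),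
    ← span_X_C_pow_eq_comap hf.ne_zero, pow_one]

end Polynomial

/-- Powers of the prime ideal `(x_i, f)` are primary with radical `(x_i, f)`. -/
theorem stmt_3 {K : Type*} [Field K] {m : ℕ} (i : Fin m)
    (f : MvPolynomial (Fin m) K) (hf : f ∈ supported K ({i}ᶜ : Set (Fin m)))
    (hirr : Irreducible f) (a : ℕ) (ha : 1 ≤ a) :
    ((Ideal.span {X i, f} : Ideal (MvPolynomial (Fin m) K)) ^ a).IsPrimary ∧
      ((Ideal.span {X i, f} : Ideal (MvPolynomial (Fin m) K)) ^ a).radical =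
        Ideal.span {X i, f} := by
  let e : MvPolynomial (Fin m) K ≃ₐ[K] Polynomial (MvPolynomial {j // j ≠ i} K) :=
    (renameEquiv K (Equiv.optionSubtypeNe i).symm).trans (optionEquivLeft K _)
  obtain ⟨g, rfl⟩ := exists_rename_eq_of_vars_subset_range f ((↑) : {j // j ≠ i} → Fin m)
    Subtype.val_injective (by rw [Subtype.range_coe_subtype]; exact mem_supported.mp hf)
  have he : rename (↑) g = e.symm (Polynomial.C g) := by
    have hcomp : e.symm.toAlgHom.comp Polynomial.CAlgHom = rename (↑) := by ext; simp [e]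
    exact (DFunLike.congr_fun hcomp g).symm
  have hg : Prime g := by
    rw [← Polynomial.prime_C_iff, ← e.apply_symm_apply (Polynomial.C g), ← he]
    exact (MulEquiv.prime_iff e.toMulEquiv).mpr hirr.prime
  have hspan : Ideal.span {X i, rename (↑) g} =
      (Ideal.span {Polynomial.X, Polynomial.C g}).map (e.symm : _ ≃+* _) := by
    rw [Ideal.map_span, Set.image_pair, he]
    simp [e]
  rw [hspan, ← Ideal.map_pow, AlgEquiv.symm_toRingEquiv, Ideal.map_symm, Ideal.map_symm,
    ← Ideal.comap_coe]
  have ha0 : a ≠ 0 := by omega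
  exact ⟨(Polynomial.isPrimary_span_X_C_pow hg ha0).comap _,
    by rw [← Ideal.comap_radical, Polynomial.radical_span_X_C_pow hg ha0, Ideal.comap_coe]⟩
end

section
/- In the polynomial ring R = K[x_1, x_2, x_3] over a field K (e.g. K = ℚ), consider the ideals I_1 = (x_1, x_2 + x_3), I_2 = (x_2, x_3 + x_1), I_3 = (x_3, x_1 + x_2). Then x_1 + x_2 + x_3 lies in I_1 ∩ I_2 ∩ I_3 but not in the product ideal I_1 · I_2 · I_3. -/
/-! Every generator of `I₁`, `I₂`, `I₃` is a linear form, so `I₁ I₂ I₃` lies in the cube of the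
ideal of the variables, whose elements have no nonzero term of degree below `3`;
but `x₁ + x₂ + x₃` is itself linear. -/

open MvPolynomial

theorem Ideal.span_pair_le {R : Type*} [Semiring R] {I : Ideal R} {x y : R} (hx : x ∈ I)
    (hy : y ∈ I) : Ideal.span {x, y} ≤ I :=
  Ideal.span_le.mpr (Set.insert_subset_iff.mpr ⟨hx, Set.singleton_subset_iff.mpr hy⟩)

theorem Ideal.add_mem_span_pair {R : Type*} [CommSemiring R] (x y : R) :
    x + y ∈ Ideal.span {x, y} :=
  Ideal.mem_span_pair.mpr ⟨1, 1, by simp⟩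

namespace MvPolynomial

variable {σ R : Type*} [CommSemiring R]

theorem X_mem_idealOfVars (i : σ) : X i ∈ idealOfVars σ R :=
  Ideal.subset_span ⟨i, rfl⟩

theorem sum_X_notMem_pow_idealOfVars [Nontrivial R] {s : Finset σ} (hs : s.Nonempty) {n : ℕ}
    (hn : 1 < n) : ∑ i ∈ s, X i ∉ idealOfVars σ R ^ n := by
  classical
  obtain ⟨j, hj⟩ := hs
  rw [mem_pow_idealOfVars_iff']
  intro h
  have hcoeff := h (Finsupp.single j 1) (by simpa using hn)
  simp [coeff_sum, coeff_X, Finsupp.single_left_inj one_ne_zero, hj] at hcoeff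

end MvPolynomial

/-- For the cyclic A₃ seed, `x₁+x₂+x₃` is in the intersection of the ideals
`I₁ = (x₁, x₂+x₃)`, `I₂ = (x₂, x₃+x₁)`, `I₃ = (x₃, x₁+x₂)` but not in their product. -/
theorem stmt_6 :
    let R := MvPolynomial (Fin 3) ℚ
    let I1 : Ideal R := Ideal.span {X 0, X 1 + X 2}
    let I2 : Ideal R := Ideal.span {X 1, X 2 + X 0}
    let I3 : Ideal R := Ideal.span {X 2, X 0 + X 1}
    (X 0 + X 1 + X 2 : R) ∈ I1 ⊓ I2 ⊓ I3 ∧ (X 0 + X 1 + X 2 : R) ∉ I1 * I2 * I3 := by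
  intro R I1 I2 I3
  refine ⟨Ideal.mem_inf.mpr ⟨Ideal.mem_inf.mpr ⟨?_, ?_⟩, ?_⟩, fun hmem => ?_⟩
  · convert Ideal.add_mem_span_pair (X 0 : R) (X 1 + X 2) using 1; ring
  · convert Ideal.add_mem_span_pair (X 1 : R) (X 2 + X 0) using 1; ring
  · convert Ideal.add_mem_span_pair (X 2 : R) (X 0 + X 1) using 1; ring
  have linear_le (i j k : Fin 3) :
      Ideal.span {X i, X j + X k} ≤ idealOfVars (Fin 3) ℚ :=
    Ideal.span_pair_le (X_mem_idealOfVars i)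
      (add_mem (X_mem_idealOfVars j) (X_mem_idealOfVars k))
  have prod_le : I1 * I2 * I3 ≤ idealOfVars (Fin 3) ℚ ^ 3 := by
    rw [pow_three']
    exact Ideal.mul_mono (Ideal.mul_mono (linear_le 0 1 2) (linear_le 1 2 0)) (linear_le 2 0 1)
  refine sum_X_notMem_pow_idealOfVars Finset.univ_nonempty (by norm_num) (prod_le ?_)
  rwa [Fin.sum_univ_three]
end

section
/- Let A ⊆ ℂ[x_1^{±1}, x_2^{±1}] be the subring generated by x_1, x_2, (1+x_2^2)/x_1, and (1+x_1^2)/x_2 (the coefficient-free Kronecker cluster algebra over ℂ). Then x_1 is not a prime element of A. -/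
/-!
Let `φ : ℂ[x₁, x₂] → ℂ[t]` send `x₁ ↦ t`, `x₂ ↦ v` with `v² = -1`. Every generator of `A` is a
fraction `f / g` with `φ g ∣ φ f` (for `(1 + x₂²) / x₁` because `1 + v² = 0`), so `φ` extends to
a map `A → ℂ[t]`. Now `x₁ x₁' = (1 + i x₂)(1 - i x₂)`, but if `x₁ ∣ 1 + w x₂` in `A`
with `w = ±i`, then specialising at `v = -w` gives `t ∣ 1 - w² = 2` in `ℂ[t]`, which is absurd.
-/

open MvPolynomial

section DvdFractions

variable {k R S : Type*} [CommSemiring k] [CommRing R] [Algebra k R] [CommRing S] [IsDomain S]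
  [Algebra k S] (K : Type*) [Field K] [Algebra R K] [Algebra k K] [IsScalarTower k R K]

/-- The fractions on which `φ` extends to a map into `S` itself. -/
def dvdFractions (φ : R →ₐ[k] S) : Subalgebra k K where
  carrier := {z | ∃ f g : R, φ g ≠ 0 ∧ φ g ∣ φ f ∧ z * algebraMap R K g = algebraMap R K f}
  mul_mem' := by
    rintro z₁ z₂ ⟨f₁, g₁, hg₁, hd₁, e₁⟩ ⟨f₂, g₂, hg₂, hd₂, e₂⟩
    refine ⟨f₁ * f₂, g₁ * g₂, ?_, ?_, ?_⟩ <;> simp only [map_mul]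
    · exact mul_ne_zero hg₁ hg₂
    · exact mul_dvd_mul hd₁ hd₂
    · linear_combination (z₂ * algebraMap R K g₂) * e₁ + algebraMap R K f₁ * e₂
  add_mem' := by
    rintro z₁ z₂ ⟨f₁, g₁, hg₁, hd₁, e₁⟩ ⟨f₂, g₂, hg₂, hd₂, e₂⟩
    refine ⟨f₁ * g₂ + f₂ * g₁, g₁ * g₂, ?_, ?_, ?_⟩ <;> simp only [map_add, map_mul]
    · exact mul_ne_zero hg₁ hg₂
    · refine dvd_add (mul_dvd_mul hd₁ dvd_rfl) ?_
      rw [mul_comm (φ g₁)]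
      exact mul_dvd_mul hd₂ dvd_rfl
    · linear_combination algebraMap R K g₂ * e₁ + algebraMap R K g₁ * e₂
  algebraMap_mem' c :=
    ⟨algebraMap k R c, 1, by simp, by simp, by simp [IsScalarTower.algebraMap_apply k R K]⟩

variable {K} {φ : R →ₐ[k] S}

theorem algebraMap_mem_dvdFractions (f : R) : algebraMap R K f ∈ dvdFractions K φ :=
  ⟨f, 1, by simp, by simp, by simp⟩

variable [IsFractionRing R K]

theorem div_mem_dvdFractions {f g : R} (hg : φ g ≠ 0) (hd : φ g ∣ φ f) :
    algebraMap R K f / algebraMap R K g ∈ dvdFractions K φ := by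
  have hg' : algebraMap R K g ≠ 0 :=
    (map_ne_zero_iff _ (IsFractionRing.injective R K)).mpr fun h ↦ hg (by simp [h])
  exact ⟨f, g, hg, hd, div_mul_cancel₀ _ hg'⟩

theorem map_dvd_of_mul_mem_dvdFractions {r a : R} {z : K} (hz : z ∈ dvdFractions K φ)
    (h : algebraMap R K r * z = algebraMap R K a) : φ r ∣ φ a := by
  obtain ⟨f, g, hg, ⟨q, hq⟩, e⟩ := hz
  have hR : r * f = a * g := IsFractionRing.injective R K <| by
    simp only [map_mul, ← e, ← h]
    ring
  refine ⟨q, mul_right_cancel₀ hg ?_⟩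
  have hS := congrArg φ hR
  simp only [map_mul, hq] at hS
  linear_combination -hS

end DvdFractions

noncomputable section

namespace Kronecker

abbrev Poly := MvPolynomial (Fin 2) ℂ

abbrev K := FractionRing Poly

abbrev x₁ : K := algebraMap Poly K (X 0)

abbrev x₂ : K := algebraMap Poly K (X 1)

def kroneckerAlgebra : Subalgebra ℂ K :=
  Algebra.adjoin ℂ {x₁, x₂, (1 + x₂ ^ 2) / x₁, (1 + x₁ ^ 2) / x₂}

def specialization (v : ℂ) : Poly →ₐ[ℂ] Polynomial ℂ :=
  aeval ![Polynomial.X, Polynomial.C v]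

@[simp] theorem specialization_X_zero (v : ℂ) : specialization v (X 0) = Polynomial.X := by
  simp [specialization]

@[simp] theorem specialization_X_one (v : ℂ) : specialization v (X 1) = Polynomial.C v := by
  simp [specialization]

theorem kroneckerAlgebra_le_dvdFractions {v : ℂ} (hv : v ^ 2 = -1) :
    kroneckerAlgebra ≤ dvdFractions K (specialization v) := by
  have hv₀ : v ≠ 0 := by rintro rfl; norm_num at hv
  refine Algebra.adjoin_le ?_
  rintro z (rfl | rfl | rfl | rfl)
  · exact algebraMap_mem_dvdFractions _
  · exact algebraMap_mem_dvdFractions _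
  · have hz : (1 + x₂ ^ 2) / x₁ = algebraMap Poly K (1 + X 1 ^ 2) / algebraMap Poly K (X 0) := by
      simp
    rw [hz]
    refine div_mem_dvdFractions (by simp [Polynomial.X_ne_zero]) ?_
    simp [← Polynomial.C_pow, hv]
  · have hz : (1 + x₁ ^ 2) / x₂ = algebraMap Poly K (1 + X 0 ^ 2) / algebraMap Poly K (X 1) := by
      simp
    rw [hz]
    refine div_mem_dvdFractions (by simp [hv₀]) ?_
    simpa using (Polynomial.isUnit_C.mpr hv₀.isUnit).dvd

theorem x₂_mem : x₂ ∈ kroneckerAlgebra :=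
  Algebra.subset_adjoin (by simp)

theorem x₁'_mem : (1 + x₂ ^ 2) / x₁ ∈ kroneckerAlgebra :=
  Algebra.subset_adjoin (by simp)

theorem one_add_mul_x₂_mem (w : ℂ) : 1 + algebraMap ℂ K w * x₂ ∈ kroneckerAlgebra :=
  add_mem (one_mem _) (mul_mem (algebraMap_mem _ w) x₂_mem)

theorem x₁_ne_zero : x₁ ≠ 0 :=
  (map_ne_zero_iff _ (IsFractionRing.injective Poly K)).mpr (X_ne_zero 0)

theorem not_x₁_dvd_one_add_mul_x₂ {w : ℂ} (hw : w ^ 2 = -1) (h : x₁ ∈ kroneckerAlgebra) :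
    ¬ (⟨x₁, h⟩ : kroneckerAlgebra) ∣ ⟨1 + algebraMap ℂ K w * x₂, one_add_mul_x₂_mem w⟩ := by
  rintro ⟨s, hs⟩
  have ha : algebraMap Poly K (1 + C w * X 1) = 1 + algebraMap ℂ K w * x₂ := by
    rw [map_add, map_one, map_mul, ← MvPolynomial.algebraMap_eq,
      ← IsScalarTower.algebraMap_apply]
  have hdvd := map_dvd_of_mul_mem_dvdFractions (r := X 0)
    (kroneckerAlgebra_le_dvdFractions (v := -w) (by simpa using hw) s.2)
    ((congrArg Subtype.val hs).symm.trans ha.symm)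
  simp [Polynomial.X_dvd_iff, ← pow_two, ← Polynomial.C_pow, hw] at hdvd

theorem x₁_not_prime (h : x₁ ∈ kroneckerAlgebra) : ¬ Prime (⟨x₁, h⟩ : kroneckerAlgebra) := by
  intro hp
  have hI : algebraMap ℂ K Complex.I ^ 2 = -1 := by
    rw [← map_pow, Complex.I_sq, map_neg, map_one]
  have hfactor : (⟨x₁, h⟩ : kroneckerAlgebra) ∣
      ⟨1 + algebraMap ℂ K Complex.I * x₂, one_add_mul_x₂_mem _⟩ *
        ⟨1 + algebraMap ℂ K (-Complex.I) * x₂, one_add_mul_x₂_mem _⟩ := by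
    refine ⟨⟨_, x₁'_mem⟩, Subtype.ext ?_⟩
    simp only [MulMemClass.mk_mul_mk, map_neg]
    rw [mul_div_cancel₀ _ x₁_ne_zero]
    linear_combination (-x₂ ^ 2) * hI
  rcases hp.dvd_or_dvd hfactor with hd | hd
  · exact not_x₁_dvd_one_add_mul_x₂ Complex.I_sq h hd
  · exact not_x₁_dvd_one_add_mul_x₂ (by rw [neg_sq, Complex.I_sq]) h hd

end Kronecker

end

/-- In the Kronecker cluster algebra over ℂ, the cluster variable `x₁` is not prime. -/
theorem stmt_8 :
    let R := MvPolynomial (Fin 2) ℂ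
    let F := FractionRing R
    let x1 : F := algebraMap R F (X 0)
    let x2 : F := algebraMap R F (X 1)
    let A := Algebra.adjoin ℂ ({x1, x2, (1 + x2 ^ 2) / x1, (1 + x1 ^ 2) / x2} : Set F)
    ∀ h : x1 ∈ A, ¬ Prime (⟨x1, h⟩ : A) := by
  intro _ _ _ _ _ h
  exact Kronecker.x₁_not_prime h
end

section
/- Let K be a field and R = K[x_1,...,x_m]. Suppose f = x_l + M where l ≠ i is an index and M is a monomial not involving x_l, and set I = (x_i, f). Then R = K[x_1,...,x̂_l,...,x_m][f] (i.e., every polynomial P ∈ R can be written uniquely as P = Σ_{r≥0} A_r f^r with A_r polynomials not involving x_l), and P ∈ I^a if and only if x_i^{a-r} divides A_r for all 0 ≤ r ≤ a. -/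
/-!
Since `M` does not involve `x_l`, the substitution `x_l ↦ x_l - M` is an automorphism of `R`
sending `f` to `x_l`. Composed with `R ≅ S[x_l]`, `S = K[x_j : j ≠ l]`, it identifies `R` with
`S[X]` so that `f ↦ X` and the polynomials not involving `x_l` become the constants. The expansion
`Σ A_r f^r` is then the coefficient expansion, and `(x_i, f)^a` becomes `(C x_i, X)^a`, which is
generated by the `C x_i^(a-r) X^r` and so consists of the polynomials whose `r`-th coefficient is
divisible by `x_i^(a-r)` for `r ≤ a`.
-/

open MvPolynomial

namespace Polynomial

section

variable {T : Type*} [CommRing T]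

def dvdCoeffIdeal (y : T) (a : ℕ) : Ideal T[X] where
  carrier := {q | ∀ r ≤ a, y ^ (a - r) ∣ q.coeff r}
  add_mem' hp hq r hr := by rw [coeff_add]; exact dvd_add (hp r hr) (hq r hr)
  zero_mem' r _ := by rw [coeff_zero]; exact dvd_zero _
  smul_mem' g q hq r hr := by
    rw [smul_eq_mul, coeff_mul]
    refine Finset.dvd_sum fun p hp => ?_
    have hp₂ : p.2 ≤ r := Finset.HasAntidiagonal.antidiagonal.snd_le hp
    exact ((pow_dvd_pow y (Nat.sub_le_sub_left hp₂ a)).trans (hq p.2 (hp₂.trans hr))).mul_left _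

variable {y : T} {a : ℕ} {q : T[X]}

theorem C_mul_mem_dvdCoeffIdeal_succ (hq : q ∈ dvdCoeffIdeal y a) :
    C y * q ∈ dvdCoeffIdeal y (a + 1) := fun r hr => by
  rw [coeff_C_mul]
  rcases le_or_gt r a with h | h
  · rw [Nat.sub_add_comm h, pow_succ']
    exact mul_dvd_mul_left y (hq r h)
  · rw [show a + 1 - r = 0 by omega, pow_zero]
    exact one_dvd _

theorem X_mul_mem_dvdCoeffIdeal_succ (hq : q ∈ dvdCoeffIdeal y a) :
    X * q ∈ dvdCoeffIdeal y (a + 1) := fun r hr => by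
  rcases r with _ | r
  · rw [mul_coeff_zero, coeff_X_zero, zero_mul]
    exact dvd_zero _
  · rw [coeff_X_mul, Nat.add_sub_add_right]
    exact hq r (by omega)

theorem span_C_X_pow_le_dvdCoeffIdeal (y : T) (a : ℕ) :
    Ideal.span {C y, X} ^ a ≤ dvdCoeffIdeal y a := by
  induction a with
  | zero => exact fun q _ r hr => by simp [Nat.le_zero.1 hr]
  | succ a ih =>
    rw [pow_succ']
    refine Submodule.mul_le.2 fun u hu q hq => ?_
    obtain ⟨p, s, rfl⟩ := Ideal.mem_span_pair.1 hu
    have hq := ih hq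
    rw [add_mul, mul_assoc, mul_assoc]
    exact add_mem (Ideal.mul_mem_left _ p (C_mul_mem_dvdCoeffIdeal_succ hq))
      (Ideal.mul_mem_left _ s (X_mul_mem_dvdCoeffIdeal_succ hq))

theorem dvdCoeffIdeal_le_span_C_X_pow (y : T) (a : ℕ) :
    dvdCoeffIdeal y a ≤ Ideal.span {C y, X} ^ a := by
  intro q hq
  have hCy : C y ∈ Ideal.span {C y, X} := Ideal.subset_span (Set.mem_insert _ _)
  have hX : X ∈ Ideal.span {C y, (X : T[X])} := Ideal.subset_span (Set.mem_insert_of_mem _ rfl)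
  rw [as_sum_support_C_mul_X_pow q]
  refine Ideal.sum_mem _ fun r _ => ?_
  rcases le_or_gt r a with h | h
  · obtain ⟨b, hb⟩ := hq r h
    have hmem : C y ^ (a - r) * X ^ r ∈ Ideal.span {C y, X} ^ a := by
      simpa only [← pow_add, Nat.sub_add_cancel h] using
        Ideal.mul_mem_mul (Ideal.pow_mem_pow hCy (a - r)) (Ideal.pow_mem_pow hX r)
    rw [hb, C_mul, C_pow, mul_comm (C y ^ _), mul_assoc]
    exact Ideal.mul_mem_left _ _ hmem
  · exact Ideal.mul_mem_left _ _ (Ideal.pow_le_pow_right h.le (Ideal.pow_mem_pow hX r))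

theorem mem_span_C_X_pow_iff : q ∈ Ideal.span {C y, X} ^ a ↔ ∀ r ≤ a, y ^ (a - r) ∣ q.coeff r :=
  ⟨fun h => span_C_X_pow_le_dvdCoeffIdeal y a h, fun h => dvdCoeffIdeal_le_span_C_X_pow y a h⟩

theorem C_dvd_C_iff {u v : T} : C u ∣ C v ↔ u ∣ v := by
  rw [C_dvd_iff_dvd_coeff]
  refine ⟨fun h => by simpa using h 0, fun h i => ?_⟩
  rw [coeff_C]
  split_ifs
  exacts [h, dvd_zero u]

end

section

variable {A T : Type*} [CommRing A] [CommRing T] (Φ : A ≃+* T[X]) {S : Set A}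

theorem apply_eq_C_coeff_zero (hS : ∀ p, p ∈ S ↔ Φ p ∈ Set.range C) {p : A} (hp : p ∈ S) :
    Φ p = C ((Φ p).coeff 0) := by
  obtain ⟨t, ht⟩ := (hS p).1 hp
  rw [← ht, coeff_C_zero]

theorem coeff_apply_sum_mul_pow (hS : ∀ p, p ∈ S ↔ Φ p ∈ Set.range C) {f : A} (hf : Φ f = X)
    (B : ℕ →₀ A) (hB : ∀ r, B r ∈ S) (s : ℕ) :
    (Φ (B.sum fun r b => b * f ^ r)).coeff s = (Φ (B s)).coeff 0 := by
  have hterm : ∀ r, (Φ (B r * f ^ r)).coeff s = if s = r then (Φ (B r)).coeff 0 else 0 := by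
    intro r
    rw [map_mul, map_pow, hf, apply_eq_C_coeff_zero Φ hS (hB r), coeff_C_mul_X_pow, coeff_C_zero]
  rw [Finsupp.sum, map_sum, finsetSum_coeff, Finset.sum_congr rfl fun r _ => hterm r,
    Finset.sum_ite_eq]
  split_ifs with hs
  · rfl
  · rw [Finsupp.notMem_support_iff.1 hs, map_zero, coeff_zero]

theorem existsUnique_sum_mul_pow (hS : ∀ p, p ∈ S ↔ Φ p ∈ Set.range C) {f : A} (hf : Φ f = X)
    (P : A) : ∃! B : ℕ →₀ A, (∀ r, B r ∈ S) ∧ P = B.sum fun r b => b * f ^ r := by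
  have hcoeff : ∀ B : ℕ →₀ A, (∀ r, B r ∈ S) → P = (B.sum fun r b => b * f ^ r) →
      ∀ r, B r = Φ.symm (C ((Φ P).coeff r)) := by
    intro B hB hP r
    rw [hP, coeff_apply_sum_mul_pow Φ hS hf B hB, ← apply_eq_C_coeff_zero Φ hS (hB r),
      RingEquiv.symm_apply_apply]
  let B₀ : ℕ →₀ A := Finsupp.onFinset (Φ P).support (fun r => Φ.symm (C ((Φ P).coeff r)))
    fun r hr => mem_support_iff.2 fun h => hr (by rw [h, map_zero, map_zero])
  have hB₀ : ∀ r, B₀ r ∈ S := fun r => (hS _).2 ⟨_, (Φ.apply_symm_apply _).symm⟩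
  refine ⟨B₀, ⟨hB₀, Φ.injective (Polynomial.ext fun s => ?_)⟩,
    fun B hB => Finsupp.ext fun r => hcoeff B hB.1 hB.2 r⟩
  rw [coeff_apply_sum_mul_pow Φ hS hf B₀ hB₀, Finsupp.onFinset_apply, RingEquiv.apply_symm_apply,
    coeff_C_zero]

theorem mem_span_pair_pow_iff (hS : ∀ p, p ∈ S ↔ Φ p ∈ Set.range C) {f : A} (hf : Φ f = X)
    {x : A} {y : T} (hx : Φ x = C y) {B : ℕ →₀ A} (hB : ∀ r, B r ∈ S) {P : A}
    (hP : P = B.sum fun r b => b * f ^ r) (a : ℕ) :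
    P ∈ Ideal.span {x, f} ^ a ↔ ∀ r ≤ a, x ^ (a - r) ∣ B r := by
  have hmap : (Ideal.span {x, f} ^ a).map Φ = Ideal.span {C y, X} ^ a := by
    rw [Ideal.map_pow, Ideal.map_span, Set.image_pair, hx, hf]
  have hdvd : ∀ r, x ^ (a - r) ∣ B r ↔ y ^ (a - r) ∣ (Φ P).coeff r := fun r => by
    rw [← map_dvd_iff Φ, map_pow, hx, apply_eq_C_coeff_zero Φ hS (hB r), ← C_pow, C_dvd_C_iff,
      hP, coeff_apply_sum_mul_pow Φ hS hf B hB]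
  rw [← Ideal.apply_mem_of_equiv_iff (f := Φ), hmap, mem_span_C_X_pow_iff]
  exact forall₂_congr fun r _ => (hdvd r).symm

end

end Polynomial

namespace MvPolynomial

variable {R σ : Type*} [CommRing R]

theorem monomial_mem_supported {s : Set σ} {d : σ →₀ ℕ} (hd : ↑d.support ⊆ s) (c : R) :
    monomial d c ∈ supported R s := by
  rw [mem_supported]
  intro j hj
  obtain ⟨e, he, hje⟩ := (mem_vars_iff_mem_support j).1 hj
  rw [Finset.mem_singleton.1 (support_monomial_subset he)] at hje
  exact hd hje

theorem aeval_update_X_of_mem_supported [DecidableEq σ] {l : σ} {p : MvPolynomial σ R}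
    (hp : p ∈ supported R {l}ᶜ) (q : MvPolynomial σ R) : aeval (Function.update X l q) p = p := by
  obtain ⟨t, rfl⟩ := (AlgHom.mem_range _).1 ((supported_eq_range_rename _).le hp)
  have hfix : Function.update X l q ∘ ((↑) : ({l}ᶜ : Set σ) → σ) = X ∘ (↑) :=
    _root_.funext fun j => Function.update_of_ne j.2 _ _
  rw [aeval_rename, hfix, ← aeval_rename, aeval_X_left_apply]

theorem aeval_update_X_add_comp [DecidableEq σ] {l : σ} (g : MvPolynomial σ R)
    {h : MvPolynomial σ R} (hh : h ∈ supported R {l}ᶜ) :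
    (aeval (Function.update X l (X l + g))).comp (aeval (Function.update X l (X l + h))) =
      aeval (Function.update X l (X l + (h + g))) := by
  refine algHom_ext fun j => ?_
  rcases eq_or_ne j l with rfl | hj
  · simp only [AlgHom.comp_apply, aeval_X, Function.update_self, map_add,
      aeval_update_X_of_mem_supported hh]
    ring
  · simp only [AlgHom.comp_apply, aeval_X, Function.update_of_ne hj]

noncomputable def translateVarEquiv [DecidableEq σ] (l : σ) {g : MvPolynomial σ R}
    (hg : g ∈ supported R {l}ᶜ) : MvPolynomial σ R ≃ₐ[R] MvPolynomial σ R :=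
  AlgEquiv.ofAlgHom (aeval (Function.update X l (X l + g)))
    (aeval (Function.update X l (X l + -g)))
    (by rw [aeval_update_X_add_comp g (neg_mem hg), neg_add_cancel, add_zero,
      Function.update_eq_self, aeval_X_left])
    (by rw [aeval_update_X_add_comp _ hg, add_neg_cancel, add_zero,
      Function.update_eq_self, aeval_X_left])

theorem translateVarEquiv_apply [DecidableEq σ] (l : σ) {g : MvPolynomial σ R}
    (hg : g ∈ supported R {l}ᶜ) (p : MvPolynomial σ R) :
    translateVarEquiv l hg p = aeval (Function.update X l (X l + g)) p :=
  rfl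

theorem exists_algEquiv_polynomial_X_add (l : σ) {g : MvPolynomial σ R}
    (hg : g ∈ supported R {l}ᶜ) :
    ∃ Φ : MvPolynomial σ R ≃ₐ[R] Polynomial (MvPolynomial {j // j ≠ l} R),
      Φ (X l + g) = Polynomial.X ∧ ∀ p, p ∈ supported R {l}ᶜ ↔ Φ p ∈ Set.range Polynomial.C := by
  classical
  let Φ := (translateVarEquiv l (neg_mem hg)).trans <|
    (renameEquiv R (Equiv.optionSubtypeNe l).symm).trans (optionEquivLeft R {j // j ≠ l})
  have hΦ_rename : Φ.toAlgHom.comp (rename Subtype.val) = Polynomial.CAlgHom := by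
    refine algHom_ext fun j => ?_
    simp [Φ, translateVarEquiv_apply, Function.update_of_ne j.2,
      Equiv.optionSubtypeNe_symm_of_ne j.2, optionEquivLeft_X_some]
  refine ⟨Φ, ?_, fun p => ?_⟩
  · have htranslate : translateVarEquiv l (neg_mem hg) (X l + g) = X l := by
      rw [translateVarEquiv_apply, map_add, aeval_X, Function.update_self,
        aeval_update_X_of_mem_supported hg, neg_add_cancel_right]
    simp only [Φ, AlgEquiv.trans_apply, htranslate, renameEquiv_apply, rename_X,
      Equiv.optionSubtypeNe_symm_self, optionEquivLeft_X_none]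
  · rw [supported_eq_range_rename, AlgHom.mem_range]
    constructor
    · rintro ⟨t, rfl⟩
      exact ⟨t, (AlgHom.congr_fun hΦ_rename t).symm⟩
    · rintro ⟨t, ht⟩
      refine ⟨t, Φ.injective ?_⟩
      rw [← ht]
      exact AlgHom.congr_fun hΦ_rename t

end MvPolynomial

theorem stmt_15_general {K : Type*} [Field K] {m : ℕ} (i l : Fin m) (hil : i ≠ l)
    (d : Fin m →₀ ℕ) (c : K) (hd : d l = 0)
    (f : MvPolynomial (Fin m) K) (hf : f = X l + monomial d c) :
    (∀ P : MvPolynomial (Fin m) K,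
      ∃! A : ℕ →₀ MvPolynomial (Fin m) K,
        (∀ r, A r ∈ supported K ({l}ᶜ : Set (Fin m))) ∧
          P = A.sum fun r Ar => Ar * f ^ r) ∧
    (∀ (P : MvPolynomial (Fin m) K) (a : ℕ) (A : ℕ →₀ MvPolynomial (Fin m) K),
      (∀ r, A r ∈ supported K ({l}ᶜ : Set (Fin m))) →
      P = (A.sum fun r Ar => Ar * f ^ r) →
      (P ∈ (Ideal.span {X i, f}) ^ a ↔ ∀ r ≤ a, (X i : MvPolynomial (Fin m) K) ^ (a - r) ∣ A r)) := by
  have hM : monomial d c ∈ supported K ({l}ᶜ : Set (Fin m)) :=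
    monomial_mem_supported (fun j hj (hjl : j = l) => Finsupp.mem_support_iff.1 hj (hjl ▸ hd)) c
  obtain ⟨Φ, hΦf, hS⟩ := exists_algEquiv_polynomial_X_add l hM
  obtain ⟨y, hy⟩ := (hS (X i)).1 (X_mem_supported.2 hil)
  subst hf
  exact ⟨Polynomial.existsUnique_sum_mul_pow Φ.toRingEquiv hS hΦf,
    fun P a A hA hP => Polynomial.mem_span_pair_pow_iff Φ.toRingEquiv hS hΦf hy.symm hA hP a⟩

/-- If `f = x_l + M` with `M` a monomial not involving `x_l`, then every `P` has a unique
expansion `P = Σ A_r f^r` with the `A_r` not involving `x_l`, and `P ∈ (x_i, f)^a` iff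
`x_i^(a-r) ∣ A_r` for all `r ≤ a`. -/
theorem stmt_15 {K : Type*} [Field K] {m : ℕ} (i l : Fin m) (hil : i ≠ l)
    (d : Fin m →₀ ℕ) (c : K) (hc : c ≠ 0) (hd : d l = 0)
    (f : MvPolynomial (Fin m) K) (hf : f = X l + monomial d c) :
    (∀ P : MvPolynomial (Fin m) K,
      ∃! A : ℕ →₀ MvPolynomial (Fin m) K,
        (∀ r, A r ∈ supported K ({l}ᶜ : Set (Fin m))) ∧
          P = A.sum fun r Ar => Ar * f ^ r) ∧
    (∀ (P : MvPolynomial (Fin m) K) (a : ℕ) (A : ℕ →₀ MvPolynomial (Fin m) K),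
      (∀ r, A r ∈ supported K ({l}ᶜ : Set (Fin m))) →
      P = (A.sum fun r Ar => Ar * f ^ r) →
      (P ∈ (Ideal.span {X i, f}) ^ a ↔ ∀ r ≤ a, (X i : MvPolynomial (Fin m) K) ^ (a - r) ∣ A r)) :=
  stmt_15_general i l hil d c hd f hf
end

section
/- In R = ℚ[x_1,...,x_n] (n ≥ 4) with the ideals I_i = (x_i, f_i) of the linearly oriented A_n quiver (f_1 = 1+x_2, f_i = x_{i-1}+x_{i+1} for 2 ≤ i ≤ n-1, f_n = 1+x_{n-1}), for every tuple (a_1,...,a_n) ∈ ℕ^n one has I_1^{a_1} ∩ I_2^{a_2} ∩ ... ∩ I_n^{a_n} = I_1^{a_1} · I_2^{a_2} ··· I_n^{a_n}. -/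
/-!
Write `I_k = (x_k, f_k)` and let `J` be the product of the first `q` powers. If `u` is a
nonzerodivisor modulo `J` and `v` one modulo `J + (u)`, then `(u, v)^a ∩ J = (u, v)^a J`. With
`I_{q+1} = (f_{q+1}, x_{q+1})` this is the induction step; by induction `J` is also the
intersection of the first `q` powers, so regularity modulo `J` only has to be checked modulo each
`I_k^{a_k}`. Since `x_k, f_k` is a regular sequence, regularity modulo `I_k` passes to all powers
of `I_k`, and modulo ideals like `I_k` it is read off from a substitution of variables with that
kernel: an element is regular as soon as its image is nonzero.

For `x_{q+1}` modulo `J + (f_{q+1})` we pass to the quotient by `f_{q+1} = x_q + x_{q+2}`, which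
replaces `x_q` by `-x_{q+2}`; then `x_{q+1}` is again the free variable at the end of a shorter
path. The induction therefore runs over paths of scaled variables modulo the kernel `K` of such a
substitution (`Chain`). At the end of the path, `f_n = x_{n-1} + 1` makes `I_{n-1}` trivial
modulo `f_n`, and after substituting `x_{n-1} = -1` the variable `x_n` occurs in none of the
remaining generators.
-/

open MvPolynomial
open Ideal (span)

namespace TypeA

section Regular

variable {R : Type*} [CommRing R]

def RegularMod (I : Ideal R) (w : R) : Prop := ∀ g, g * w ∈ I → g ∈ I

theorem RegularMod.pow {I : Ideal R} {w : R} (h : RegularMod I w) (m : ℕ) :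
    RegularMod I (w ^ m) := by
  induction m with
  | zero => intro g hg; simpa using hg
  | succ m ih => exact fun g hg => ih g (h _ (by rwa [mul_assoc, ← pow_succ]))

theorem regularMod_biInf {ι : Type*} {s : Finset ι} {A : ι → Ideal R} {w : R}
    (h : ∀ k ∈ s, RegularMod (A k) w) : RegularMod (⨅ k ∈ s, A k) w := by
  intro g hg
  simp only [Submodule.mem_iInf] at hg ⊢
  exact fun k hk => h k hk g (hg k hk)

theorem span_pair_pow_succ (u v : R) (d : ℕ) :
    span {u, v} ^ (d + 1) =
      span {u} * span {u, v} ^ d ⊔ span {v ^ (d + 1)} := by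
  have hu : span {u} ≤ span {u, v} := Ideal.span_mono (by simp)
  have hv : ∀ e, span {v ^ e} ≤ span {u, v} ^ e := fun e =>
    (Ideal.span_singleton_le_iff_mem _).2 (Ideal.pow_mem_pow (Ideal.subset_span (by simp)) _)
  refine le_antisymm ?_ (sup_le ?_ (hv _))
  · induction d with
    | zero => simp [Ideal.span_insert]
    | succ d ih =>
      calc span {u, v} ^ (d + 2) = span {u, v} ^ (d + 1) * span {u, v} :=
            pow_succ _ _
        _ ≤ (span {u} * span {u, v} ^ d ⊔ span {v ^ (d + 1)}) *
            (span {u} ⊔ span {v}) := by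
          rw [← Ideal.span_insert]; exact Ideal.mul_mono_left ih
        _ = span {u} * span {u, v} ^ d * span {u, v} ⊔
            (span {v ^ (d + 1)} * span {u} ⊔ span {v ^ (d + 2)}) := by
          rw [Ideal.sup_mul, ← Ideal.span_insert]
          congr 1
          rw [Ideal.span_insert, Ideal.mul_sup,
            Ideal.span_singleton_mul_span_singleton (v ^ (d + 1)) v, ← pow_succ]
        _ ≤ _ := by
          rw [mul_assoc, ← pow_succ, ← sup_assoc]
          refine sup_le_sup_right (sup_le le_rfl ?_) _
          rw [mul_comm]
          exact Ideal.mul_mono_right (hv _)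
  · rw [pow_succ']; exact Ideal.mul_mono_left hu

theorem mem_span_pair_pow_succ_sup {u v g : R} {K : Ideal R} {d : ℕ} :
    g ∈ span {u, v} ^ (d + 1) ⊔ K ↔
      ∃ h ∈ span {u, v} ^ d, ∃ r, ∃ κ ∈ K, u * h + r * v ^ (d + 1) + κ = g := by
  rw [span_pair_pow_succ, Submodule.mem_sup]
  constructor
  · rintro ⟨y, hy, κ, hκ, rfl⟩
    obtain ⟨y₁, hy₁, y₂, hy₂, rfl⟩ := Submodule.mem_sup.1 hy
    obtain ⟨h, hh, rfl⟩ := Ideal.mem_span_singleton_mul.1 hy₁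
    obtain ⟨r, rfl⟩ := Ideal.mem_span_singleton'.1 hy₂
    exact ⟨h, hh, r, κ, hκ, rfl⟩
  · rintro ⟨h, hh, r, κ, hκ, rfl⟩
    exact ⟨_, Submodule.add_mem_sup (Ideal.mem_span_singleton_mul.2 ⟨h, hh, rfl⟩)
      (Ideal.mem_span_singleton'.2 ⟨r, rfl⟩), κ, hκ, rfl⟩

theorem pow_succ_mem_span_pair_pow (u v : R) (d : ℕ) : v ^ (d + 1) ∈ span {u, v} ^ d :=
  Ideal.pow_le_pow_right d.le_succ (Ideal.pow_mem_pow (Ideal.subset_span (by simp)) _)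

theorem span_pair_pow_mul_sup_inf_eq {K J : Ideal R} {u v : R} (hKJ : K ≤ J)
    (hu : RegularMod J u) (hv : RegularMod (span {u} ⊔ J) v) (a : ℕ) :
    (span {u, v} ^ a ⊔ K) ⊓ J = span {u, v} ^ a * J ⊔ K := by
  induction a with
  | zero => simp [Ideal.one_eq_top, hKJ]
  | succ a ih =>
    refine le_antisymm (fun g hg => ?_) (sup_le (le_inf (le_sup_of_le_left Ideal.mul_le_left)
      Ideal.mul_le_right) (le_inf le_sup_right hKJ))
    obtain ⟨hgI, hgJ⟩ := Submodule.mem_inf.1 hg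
    obtain ⟨h, hh, r, κ, hκ, rfl⟩ := mem_span_pair_pow_succ_sup.1 hgI
    have hr : r ∈ span {u} ⊔ J := hv.pow (a + 1) r <| by
      rw [show r * v ^ (a + 1) = (-h) * u + (u * h + r * v ^ (a + 1) + κ - κ) by ring]
      exact Ideal.mem_span_singleton_sup.2 ⟨-h, _, sub_mem hgJ (hKJ hκ), rfl⟩
    obtain ⟨s, j, hj, rfl⟩ := Ideal.mem_span_singleton_sup.1 hr
    have hmem : h + s * v ^ (a + 1) ∈ span {u, v} ^ a * J ⊔ K := by
      rw [← ih]
      refine Submodule.mem_inf.2 ⟨Ideal.mem_sup_left (add_mem hh (Ideal.mul_mem_left _ _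
        (pow_succ_mem_span_pair_pow u v a))), hu _ ?_⟩
      rw [show (h + s * v ^ (a + 1)) * u =
        u * h + (s * u + j) * v ^ (a + 1) + κ - (j * v ^ (a + 1) + κ) by ring]
      exact sub_mem hgJ (add_mem (Ideal.mul_mem_right _ _ hj) (hKJ hκ))
    obtain ⟨m, hm, κ', hκ', hmκ⟩ := Submodule.mem_sup.1 hmem
    rw [show u * h + (s * u + j) * v ^ (a + 1) + κ = u * m + v ^ (a + 1) * j + (u * κ' + κ) by
      linear_combination (-u) * hmκ]
    refine Submodule.add_mem_sup (add_mem ?_ ?_) (add_mem (Ideal.mul_mem_left _ _ hκ') hκ)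
    · rw [pow_succ', mul_assoc]
      exact Ideal.mul_mem_mul (Ideal.subset_span (by simp)) hm
    · exact Ideal.mul_mem_mul (Ideal.pow_mem_pow (Ideal.subset_span (by simp)) _) hj

theorem mul_mem_pow_succ_sup {I K : Ideal R} {x y : R} {d : ℕ} (hx : x ∈ I ⊔ K)
    (hy : y ∈ I ^ d ⊔ K) : x * y ∈ I ^ (d + 1) ⊔ K := by
  refine (?_ : (I ⊔ K) * (I ^ d ⊔ K) ≤ I ^ (d + 1) ⊔ K) (Ideal.mul_mem_mul hx hy)
  rw [Ideal.sup_mul, Ideal.mul_sup, Ideal.mul_sup, pow_succ']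
  exact sup_le (sup_le le_sup_left (le_sup_of_le_right Ideal.mul_le_right))
    (le_sup_of_le_right (sup_le Ideal.mul_le_left Ideal.mul_le_right))

theorem sup_eq_sup_iff_map_mk_eq {A B K : Ideal R} :
    A ⊔ K = B ⊔ K ↔ A.map (Ideal.Quotient.mk K) = B.map (Ideal.Quotient.mk K) := by
  rw [Ideal.map_eq_iff_sup_ker_eq_of_surjective _ Ideal.Quotient.mk_surjective, Ideal.mk_ker]

theorem span_pair_sup_eq_of_sub_mem {K : Ideal R} {x y x' y' : R} (hx : x - x' ∈ K)
    (hy : y - y' ∈ K) : span {x, y} ⊔ K = span {x', y'} ⊔ K := by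
  rw [sup_eq_sup_iff_map_mk_eq, Ideal.map_span, Ideal.map_span, Set.image_pair, Set.image_pair,
    Ideal.Quotient.eq.2 hx, Ideal.Quotient.eq.2 hy]

theorem prod_pow_sup_eq_of_sup_eq {ι : Type*} {s : Finset ι} {A B : ι → Ideal R} {K : Ideal R}
    (a : ι → ℕ) (h : ∀ k ∈ s, A k ⊔ K = B k ⊔ K) :
    (∏ k ∈ s, A k ^ a k) ⊔ K = (∏ k ∈ s, B k ^ a k) ⊔ K := by
  have hmap : ∀ I, I.map (Ideal.Quotient.mk K) = Ideal.mapHom (Ideal.Quotient.mk K) I :=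
    fun _ => rfl
  rw [sup_eq_sup_iff_map_mk_eq, hmap, hmap, map_prod, map_prod]
  refine Finset.prod_congr rfl fun k hk => ?_
  rw [map_pow, map_pow, ← hmap, ← hmap, ← sup_eq_sup_iff_map_mk_eq.1 (h k hk)]

section SpanPair

variable {K : Ideal R} {u v w : R}

theorem mem_sup_of_mul_mem_span_pair_pow_succ_sup (hu : RegularMod K u)
    (hv : RegularMod (span {u} ⊔ K) v) {y : R} {e : ℕ}
    (hy : u * y ∈ span {u, v} ^ (e + 1) ⊔ K) : y ∈ span {u, v} ^ e ⊔ K := by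
  obtain ⟨h, hh, γ, κ, hκ, hy⟩ := mem_span_pair_pow_succ_sup.1 hy
  have hγ : γ ∈ span {u} ⊔ K := hv.pow (e + 1) γ <|
    Ideal.mem_span_singleton_sup.2 ⟨y - h, -κ, neg_mem hκ, by linear_combination -hy⟩
  obtain ⟨s, κ', hκ', rfl⟩ := Ideal.mem_span_singleton_sup.1 hγ
  have hK : y - h - s * v ^ (e + 1) ∈ K := hu _ <| by
    rw [show (y - h - s * v ^ (e + 1)) * u = κ' * v ^ (e + 1) + κ by linear_combination -hy]
    exact add_mem (Ideal.mul_mem_right _ _ hκ') hκ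
  rw [show y = h + s * v ^ (e + 1) + (y - h - s * v ^ (e + 1)) by ring]
  exact Submodule.add_mem_sup
    (add_mem hh (Ideal.mul_mem_left _ _ (pow_succ_mem_span_pair_pow u v e))) hK

theorem mem_span_pair_sup_of_mul_pow_mem (hv : RegularMod (span {u} ⊔ K) v)
    {x y : R} {e : ℕ} (hy : u * x + y * v ^ e ∈ span {u, v} ^ (e + 1) ⊔ K) :
    y ∈ span {u, v} ⊔ K := by
  obtain ⟨h, -, β, κ, hκ, hy⟩ := mem_span_pair_pow_succ_sup.1 hy
  have hyβ : y - β * v ∈ span {u} ⊔ K := hv.pow e _ <|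
    Ideal.mem_span_singleton_sup.2 ⟨h - x, κ, hκ, by linear_combination hy⟩
  rw [show y = β * v + (y - β * v) by ring]
  refine add_mem (Ideal.mem_sup_left (Ideal.mul_mem_left _ _ (Ideal.subset_span (by simp)))) ?_
  exact sup_le_sup_right (Ideal.span_mono (by simp)) K hyβ

theorem mem_span_pair_pow_succ_sup_of_mul_mem (hu : RegularMod K u)
    (hv : RegularMod (span {u} ⊔ K) v) (hw : RegularMod (span {u, v} ⊔ K) w)
    (d : ℕ) (g : R) (hg : g ∈ span {u, v} ^ d ⊔ K)
    (hgw : g * w ∈ span {u, v} ^ (d + 1) ⊔ K) : g ∈ span {u, v} ^ (d + 1) ⊔ K := by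
  induction d generalizing g with
  | zero => simpa using hw g (by simpa using hgw)
  | succ d ih =>
    obtain ⟨h, hh, r, κ, hκ, rfl⟩ := mem_span_pair_pow_succ_sup.1 hg
    have hκw : κ * w ∈ span {u, v} ^ (d + 2) ⊔ K := Ideal.mem_sup_right (Ideal.mul_mem_right _ _ hκ)
    have hr : r ∈ span {u, v} ⊔ K := hw r <| mem_span_pair_sup_of_mul_pow_mem hv (x := h * w)
      (by rw [show u * (h * w) + r * w * v ^ (d + 1) = (u * h + r * v ^ (d + 1) + κ) * w - κ * w
        by ring]; exact sub_mem hgw hκw)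
    have hrv : r * v ^ (d + 1) ∈ span {u, v} ^ (d + 2) ⊔ K :=
      mul_mem_pow_succ_sup hr
        (Ideal.mem_sup_left (Ideal.pow_mem_pow (Ideal.subset_span (by simp)) _))
    have hhw : h * w ∈ span {u, v} ^ (d + 1) ⊔ K :=
      mem_sup_of_mul_mem_span_pair_pow_succ_sup hu hv <| by
        rw [show u * (h * w) = (u * h + r * v ^ (d + 1) + κ) * w - r * v ^ (d + 1) * w - κ * w
          by ring]
        exact sub_mem (sub_mem hgw (Ideal.mul_mem_right _ _ hrv)) hκw
    have hu' : u ∈ span {u, v} ⊔ K := Ideal.mem_sup_left (Ideal.subset_span (by simp))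
    exact add_mem (add_mem (mul_mem_pow_succ_sup hu' (ih h (Ideal.mem_sup_left hh) hhw)) hrv)
      (Ideal.mem_sup_right hκ)

theorem RegularMod.span_pair_pow_sup (hu : RegularMod K u)
    (hv : RegularMod (span {u} ⊔ K) v) (hw : RegularMod (span {u, v} ⊔ K) w)
    (a : ℕ) : RegularMod (span {u, v} ^ a ⊔ K) w := by
  intro g hg
  suffices ∀ j ≤ a, g ∈ span {u, v} ^ j ⊔ K from this a le_rfl
  intro j
  induction j with
  | zero => simp [Ideal.one_eq_top]
  | succ j ih =>
    exact fun hj => mem_span_pair_pow_succ_sup_of_mul_mem hu hv hw j g (ih (by omega))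
      (sup_le_sup_right (Ideal.pow_le_pow_right hj) K hg)

end SpanPair

end Regular

section Retraction

variable {k R : Type*} [CommRing k] [CommRing R] [Algebra k R]

structure IsRetraction (K : Ideal R) (φ : R →ₐ[k] R) : Prop where
  map_eq_zero : ∀ x ∈ K, φ x = 0
  sub_map_mem : ∀ x, x - φ x ∈ K

namespace IsRetraction

variable {K : Ideal R} {φ : R →ₐ[k] R}

theorem bot : IsRetraction (⊥ : Ideal R) (AlgHom.id k R) :=
  ⟨fun x hx => by simpa using hx, fun x => by simp⟩

theorem mem_iff (h : IsRetraction K φ) {x : R} : x ∈ K ↔ φ x = 0 :=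
  ⟨h.map_eq_zero x, fun hx => by simpa [hx] using h.sub_map_mem x⟩

theorem map_map (h : IsRetraction K φ) (x : R) : φ (φ x) = φ x := by
  have := h.map_eq_zero _ (h.sub_map_mem x)
  rwa [map_sub, sub_eq_zero, eq_comm] at this

theorem regularMod [IsDomain R] (h : IsRetraction K φ) {w : R} (hw : φ w ≠ 0) :
    RegularMod K w := fun g hg => by
  rw [h.mem_iff, map_mul] at hg
  exact h.mem_iff.2 ((mul_eq_zero.1 hg).resolve_right hw)

theorem comp (h : IsRetraction K φ) {ℓ : R} {ψ : R →ₐ[k] R}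
    (hψ : IsRetraction (span {φ ℓ}) ψ) : IsRetraction (K ⊔ span {ℓ}) (ψ.comp φ) := by
  have hφℓ : span {φ ℓ} ≤ K ⊔ span {ℓ} := by
    rw [Ideal.span_singleton_le_iff_mem, show φ ℓ = ℓ - (ℓ - φ ℓ) by ring]
    exact sub_mem (Ideal.mem_sup_right (Ideal.mem_span_singleton_self ℓ))
      (Ideal.mem_sup_left (h.sub_map_mem ℓ))
  refine ⟨fun x hx => ?_, fun x => ?_⟩
  · obtain ⟨κ, hκ, y, hy, rfl⟩ := Submodule.mem_sup.1 hx
    obtain ⟨r, rfl⟩ := Ideal.mem_span_singleton'.1 hy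
    simp [h.map_eq_zero κ hκ, hψ.map_eq_zero _ (Ideal.mem_span_singleton_self _)]
  · rw [show x - ψ.comp φ x = (x - φ x) + (φ x - ψ (φ x)) by simp]
    exact add_mem (Ideal.mem_sup_left (h.sub_map_mem x)) (hφℓ (hψ.sub_map_mem _))

theorem map_sup (h : IsRetraction K φ) (I : Ideal R) : I.map φ ⊔ K = I ⊔ K := by
  refine le_antisymm (sup_le (Ideal.map_le_iff_le_comap.2 fun x hx => ?_) le_sup_right)
    (sup_le (fun x hx => ?_) le_sup_right)
  · rw [Ideal.mem_comap, show φ x = x - (x - φ x) by ring]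
    exact sub_mem (Ideal.mem_sup_left hx) (Ideal.mem_sup_right (h.sub_map_mem x))
  · rw [show x = φ x + (x - φ x) by ring]
    exact Submodule.add_mem_sup (Ideal.mem_map_of_mem φ hx) (h.sub_map_mem x)

theorem regularMod_sup (h : IsRetraction K φ) {I : Ideal R} {t : R} (ht : φ t = t)
    (hreg : RegularMod (I.map φ) t) : RegularMod (I ⊔ K) t := by
  intro g hg
  have hφg : φ g * t ∈ I.map φ := by
    obtain ⟨y, hy, κ, hκ, hyκ⟩ := Submodule.mem_sup.1 hg
    rw [← ht, ← map_mul, ← hyκ, map_add, h.map_eq_zero κ hκ, add_zero]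
    exact Ideal.mem_map_of_mem φ hy
  rw [← h.map_sup, show g = φ g + (g - φ g) by ring]
  exact Submodule.add_mem_sup (hreg _ hφg) (h.sub_map_mem g)

theorem sub_mem_span_singleton_mul_map {t : R} (h : IsRetraction (span {t}) φ)
    {I : Ideal R} {y : R} (hy : y ∈ I.map φ) : y - φ y ∈ span {t} * I.map φ := by
  induction hy using Submodule.span_induction with
  | mem _ hx =>
    obtain ⟨x, -, rfl⟩ := hx
    rw [h.map_map, sub_self]
    exact zero_mem _
  | zero => simp
  | add a b _ _ ha hb => rw [map_add, add_sub_add_comm]; exact add_mem ha hb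
  | smul c y hy hcy =>
    rw [smul_eq_mul, map_mul, show c * y - φ c * φ y = (c - φ c) * y + φ c * (y - φ y) by ring]
    exact add_mem (Ideal.mul_mem_mul (h.sub_map_mem c) hy) (Ideal.mul_mem_left _ _ hcy)

theorem regularMod_map {t : R} (h : IsRetraction (span {t}) φ) (ht : IsLeftRegular t)
    (I : Ideal R) : RegularMod (I.map φ) t := by
  intro g hg
  have hφ : φ (g * t) = 0 := h.map_eq_zero _ (Ideal.mem_span_singleton'.2 ⟨g, rfl⟩)
  have := h.sub_mem_span_singleton_mul_map hg
  rw [hφ, sub_zero] at this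
  obtain ⟨m, hm, hgm⟩ := Ideal.mem_span_singleton_mul.1 this
  rwa [ht (hgm.trans (mul_comm g t))] at hm

end IsRetraction

end Retraction

section Solve

variable {𝕜 ι : Type*} [Field 𝕜]

theorem sub_aeval_mem {A : Ideal (MvPolynomial ι 𝕜)} {f : ι → MvPolynomial ι 𝕜}
    (h : ∀ i, X i - f i ∈ A) (x : MvPolynomial ι 𝕜) : x - aeval f x ∈ A := by
  induction x using MvPolynomial.induction_on with
  | C a => simp
  | add p q hp hq => rw [map_add, add_sub_add_comm]; exact add_mem hp hq
  | mul_X p i hp =>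
    rw [map_mul, aeval_X, show p * X i - aeval f p * f i = p * (X i - f i) + (p - aeval f p) * f i
      by ring]
    exact add_mem (Ideal.mul_mem_left _ _ (h i)) (Ideal.mul_mem_right _ _ hp)

variable [DecidableEq ι]

noncomputable def solve (i : ι) (c : 𝕜) (r : MvPolynomial ι 𝕜) :
    MvPolynomial ι 𝕜 →ₐ[𝕜] MvPolynomial ι 𝕜 :=
  aeval (Function.update X i (-c⁻¹ • r))

variable {i : ι} {c : 𝕜} {r : MvPolynomial ι 𝕜}

theorem solve_X_of_ne {j : ι} (h : j ≠ i) : solve i c r (X j) = X j := by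
  rw [solve, aeval_X, Function.update_of_ne h]

theorem solve_smul_X_self (hc : c ≠ 0) : solve i c r (c • X i) = -r := by
  rw [solve, map_smul, aeval_X, Function.update_self, smul_smul, mul_neg, mul_inv_cancel₀ hc,
    neg_smul, one_smul]

theorem isRetraction_solve (hc : c ≠ 0) (hr : solve i c r r = r) :
    IsRetraction (span {c • X i + r}) (solve i c r) := by
  refine ⟨fun x hx => ?_, sub_aeval_mem fun j => ?_⟩
  · obtain ⟨y, rfl⟩ := Ideal.mem_span_singleton'.1 hx
    rw [map_mul, map_add, solve_smul_X_self hc, hr, neg_add_cancel, mul_zero]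
  · rcases eq_or_ne j i with rfl | hj
    · rw [Function.update_self, neg_smul, sub_neg_eq_add, Ideal.mem_span_singleton']
      exact ⟨C c⁻¹, by rw [mul_add, ← smul_eq_C_mul, ← smul_eq_C_mul, smul_smul,
        inv_mul_cancel₀ hc, one_smul]⟩
    · rw [Function.update_of_ne hj, sub_self]
      exact zero_mem _

theorem coeff_single_one_one (i : ι) : coeff (Finsupp.single i 1) (1 : MvPolynomial ι 𝕜) = 0 := by
  rw [coeff_one, if_neg (Finsupp.single_ne_zero.2 one_ne_zero).symm]

end Solve

def chainIdeal {R : Type*} [CommRing R] (v : ℕ → R) (k : ℕ) : Ideal R :=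
  span {v k, v (k - 1) + v (k + 1)}

structure Chain (𝕜 ι : Type*) [Field 𝕜] (q : ℕ) where
  v : ℕ → MvPolynomial ι 𝕜
  σ : ℕ → ι
  ε : ℕ → 𝕜
  K : Ideal (MvPolynomial ι 𝕜)
  φ : MvPolynomial ι 𝕜 →ₐ[𝕜] MvPolynomial ι 𝕜
  v_zero : v 0 = 1
  v_eq : ∀ i, 1 ≤ i → i ≤ q + 1 → v i = ε i • X (σ i)
  ε_ne_zero : ∀ i, 1 ≤ i → i ≤ q + 1 → ε i ≠ 0
  σ_inj : ∀ i j, 1 ≤ i → i ≤ q + 1 → 1 ≤ j → j ≤ q + 1 → σ i = σ j → i = j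
  isRetraction : IsRetraction K φ
  φ_v : ∀ i, i ≤ q + 1 → φ (v i) = v i

namespace Chain

variable {𝕜 ι : Type*} [Field 𝕜] {q : ℕ}

section Retractions

variable (F : Chain 𝕜 ι q)

theorem σ_ne {i j : ℕ} (hi₁ : 1 ≤ i) (hi : i ≤ q + 1) (hj₁ : 1 ≤ j) (hj : j ≤ q + 1)
    (hij : i ≠ j) : F.σ i ≠ F.σ j :=
  fun h => hij (F.σ_inj i j hi₁ hi hj₁ hj h)

variable [DecidableEq ι]

theorem solve_v {c : 𝕜} {r : MvPolynomial ι 𝕜} {j m : ℕ} (hj : j ≤ q + 1) (hm₁ : 1 ≤ m)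
    (hm : m ≤ q + 1) (hjm : j ≠ m) : solve (F.σ m) c r (F.v j) = F.v j := by
  rcases Nat.eq_zero_or_pos j with rfl | hj₁
  · rw [F.v_zero, map_one]
  · rw [F.v_eq j hj₁ hj, map_smul, solve_X_of_ne (F.σ_ne hj₁ hj hm₁ hm hjm)]

theorem solve_v_self {r : MvPolynomial ι 𝕜} {m : ℕ} (hm₁ : 1 ≤ m) (hm : m ≤ q + 1) :
    solve (F.σ m) (F.ε m) r (F.v m) = -r := by
  rw [F.v_eq m hm₁ hm, solve_smul_X_self (F.ε_ne_zero m hm₁ hm)]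

theorem coeff_v {j m : ℕ} (hj : j ≤ q + 1) (hm₁ : 1 ≤ m) (hm : m ≤ q + 1) :
    coeff (Finsupp.single (F.σ m) 1) (F.v j) = if j = m then F.ε m else 0 := by
  rcases Nat.eq_zero_or_pos j with rfl | hj₁
  · rw [F.v_zero, coeff_single_one_one, if_neg (by omega)]
  · rw [F.v_eq j hj₁ hj, coeff_smul, coeff_X]
    by_cases hjm : j = m
    · simp [hjm]
    · simp [hjm, Finsupp.single_left_inj, F.σ_ne hj₁ hj hm₁ hm hjm]

theorem v_ne_zero {j : ℕ} (hj : j ≤ q + 1) : F.v j ≠ 0 := by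
  rcases Nat.eq_zero_or_pos j with rfl | hj₁
  · simp [F.v_zero]
  · refine ne_zero_iff.2 ⟨Finsupp.single (F.σ j) 1, ?_⟩
    rw [F.coeff_v hj hj₁ hj, if_pos rfl]
    exact F.ε_ne_zero j hj₁ hj

noncomputable def retractVar (k : ℕ) : MvPolynomial ι 𝕜 →ₐ[𝕜] MvPolynomial ι 𝕜 :=
  (solve (F.σ k) (F.ε k) 0).comp F.φ

noncomputable def retractIdeal (k : ℕ) : MvPolynomial ι 𝕜 →ₐ[𝕜] MvPolynomial ι 𝕜 :=
  (solve (F.σ (k + 1)) (F.ε (k + 1)) (F.v (k - 1))).comp (F.retractVar k)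

variable {F} {k : ℕ}

theorem retractVar_v (hk₁ : 1 ≤ k) (hk : k ≤ q + 1) {j : ℕ} (hj : j ≤ q + 1) (hjk : j ≠ k) :
    F.retractVar k (F.v j) = F.v j := by
  rw [retractVar, AlgHom.comp_apply, F.φ_v j hj, F.solve_v hj hk₁ hk hjk]

theorem retractVar_v_self (hk₁ : 1 ≤ k) (hk : k ≤ q + 1) : F.retractVar k (F.v k) = 0 := by
  rw [retractVar, AlgHom.comp_apply, F.φ_v k hk, F.solve_v_self hk₁ hk, neg_zero]

theorem isRetraction_retractVar (hk₁ : 1 ≤ k) (hk : k ≤ q + 1) :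
    IsRetraction (F.K ⊔ span {F.v k}) (F.retractVar k) := by
  refine F.isRetraction.comp ?_
  have h := isRetraction_solve (i := F.σ k) (F.ε_ne_zero k hk₁ hk) (map_zero _)
  rwa [add_zero, ← F.v_eq k hk₁ hk, ← F.φ_v k hk] at h

theorem retractIdeal_v (hk₁ : 1 ≤ k) (hk : k ≤ q) {j : ℕ} (hj : j ≤ q + 1) (hjk : j ≠ k)
    (hjk' : j ≠ k + 1) : F.retractIdeal k (F.v j) = F.v j := by
  rw [retractIdeal, AlgHom.comp_apply, retractVar_v hk₁ (by omega) hj hjk,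
    F.solve_v hj (by omega) (by omega) hjk']

theorem retractIdeal_v_self (hk₁ : 1 ≤ k) (hk : k ≤ q) : F.retractIdeal k (F.v k) = 0 := by
  rw [retractIdeal, AlgHom.comp_apply, retractVar_v_self hk₁ (by omega), map_zero]

theorem retractIdeal_v_succ (hk₁ : 1 ≤ k) (hk : k ≤ q) :
    F.retractIdeal k (F.v (k + 1)) = -F.v (k - 1) := by
  rw [retractIdeal, AlgHom.comp_apply, retractVar_v hk₁ (by omega) (by omega) (by omega),
    F.solve_v_self (by omega) (by omega)]

theorem isRetraction_retractIdeal (hk₁ : 1 ≤ k) (hk : k ≤ q) :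
    IsRetraction (F.K ⊔ span {F.v k} ⊔ span {F.v (k - 1) + F.v (k + 1)})
      (F.retractIdeal k) := by
  refine (isRetraction_retractVar hk₁ (by omega)).comp ?_
  rw [map_add, retractVar_v hk₁ (by omega) (by omega) (by omega),
    retractVar_v hk₁ (by omega) (by omega) (by omega), F.v_eq (k + 1) (by omega) (by omega),
    add_comm]
  exact isRetraction_solve (F.ε_ne_zero _ (by omega) (by omega))
    (F.solve_v (by omega) (by omega) (by omega) (by omega))

theorem regularMod_chainIdeal_pow_sup (hk₁ : 1 ≤ k) (hk : k ≤ q) {w : MvPolynomial ι 𝕜}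
    (hw : F.retractIdeal k w ≠ 0) (a : ℕ) : RegularMod (chainIdeal F.v k ^ a ⊔ F.K) w := by
  refine RegularMod.span_pair_pow_sup ?_ ?_ ?_ a
  · exact F.isRetraction.regularMod (by rw [F.φ_v k (by omega)]; exact F.v_ne_zero (by omega))
  · rw [sup_comm]
    refine (isRetraction_retractVar hk₁ (by omega)).regularMod
      (ne_zero_iff.2 ⟨Finsupp.single (F.σ (k + 1)) 1, ?_⟩)
    rw [map_add, retractVar_v hk₁ (by omega) (by omega) (by omega),
      retractVar_v hk₁ (by omega) (by omega) (by omega), coeff_add,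
      F.coeff_v (m := k + 1) (by omega) (by omega) (by omega),
      F.coeff_v (m := k + 1) (by omega) (by omega) (by omega)]
    simpa using F.ε_ne_zero (k + 1) (by omega) (by omega)
  · rw [Ideal.span_insert, sup_comm, ← sup_assoc]
    exact (isRetraction_retractIdeal hk₁ hk).regularMod hw

end Retractions

variable [DecidableEq ι] {k : ℕ}

theorem retractIdeal_v_add_v_ne_zero {F : Chain 𝕜 ι (q + 1)} (hk₁ : 1 ≤ k) (hk : k ≤ q) :
    F.retractIdeal k (F.v q + F.v (q + 2)) ≠ 0 := by
  have hq : coeff (Finsupp.single (F.σ (q + 2)) 1) (F.retractIdeal k (F.v q)) = 0 := by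
    rcases (show k = q ∨ q = k + 1 ∨ (k ≠ q ∧ k + 1 ≠ q) by omega) with rfl | rfl | ⟨h, h'⟩
    · rw [retractIdeal_v_self hk₁ (by omega), coeff_zero]
    · rw [retractIdeal_v_succ hk₁ (by omega), coeff_neg,
        F.coeff_v (by omega) (by omega) (by omega), if_neg (by omega), neg_zero]
    · rw [retractIdeal_v hk₁ (by omega) (by omega) (Ne.symm h) (by omega),
        F.coeff_v (by omega) (by omega) (by omega), if_neg (by omega)]
  refine ne_zero_iff.2 ⟨Finsupp.single (F.σ (q + 2)) 1, ?_⟩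
  rw [map_add, retractIdeal_v (j := q + 2) hk₁ (by omega) (by omega) (by omega) (by omega),
    coeff_add, hq,
    F.coeff_v (by omega) (by omega) (by omega), if_pos rfl, zero_add]
  exact F.ε_ne_zero _ (by omega) (by omega)

theorem retractIdeal_v_succ_ne_zero {F : Chain 𝕜 ι q} (hk₁ : 1 ≤ k) (hk : k ≤ q) :
    F.retractIdeal k (F.v (q + 1)) ≠ 0 := by
  rcases eq_or_ne k q with rfl | hkq
  · rw [retractIdeal_v_succ hk₁ le_rfl, neg_ne_zero]
    exact F.v_ne_zero (by omega)
  · rw [retractIdeal_v hk₁ hk le_rfl (by omega) (by omega)]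
    exact F.v_ne_zero le_rfl

def restrict (F : Chain 𝕜 ι (q + 1)) : Chain 𝕜 ι q :=
  { F with
    v_eq := fun i hi₁ hi => F.v_eq i hi₁ (by omega)
    ε_ne_zero := fun i hi₁ hi => F.ε_ne_zero i hi₁ (by omega)
    σ_inj := fun i j hi₁ hi hj₁ hj => F.σ_inj i j hi₁ (by omega) hj₁ (by omega)
    φ_v := fun i hi => F.φ_v i (by omega) }

noncomputable def contract (F : Chain 𝕜 ι (q + 1)) (hq : 1 ≤ q) : Chain 𝕜 ι q where
  v := Function.update F.v q (-F.v (q + 2))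
  σ := Function.update F.σ q (F.σ (q + 2))
  ε := Function.update F.ε q (-F.ε (q + 2))
  K := F.K ⊔ span {F.v q + F.v (q + 2)}
  φ := (solve (F.σ q) (F.ε q) (F.v (q + 2))).comp F.φ
  v_zero := by rw [Function.update_of_ne (by omega), F.v_zero]
  v_eq i hi₁ hi := by
    rcases eq_or_ne i q with rfl | hiq
    · simp only [Function.update_self]
      rw [F.v_eq _ (by omega) (by omega), neg_smul]
    · simp only [Function.update_of_ne hiq]
      exact F.v_eq i hi₁ (by omega)
  ε_ne_zero i hi₁ hi := by
    rcases eq_or_ne i q with rfl | hiq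
    · rw [Function.update_self, neg_ne_zero]
      exact F.ε_ne_zero _ (by omega) (by omega)
    · rw [Function.update_of_ne hiq]
      exact F.ε_ne_zero i hi₁ (by omega)
  σ_inj i j hi₁ hi hj₁ hj h := by
    have key : ∀ l, Function.update F.σ q (F.σ (q + 2)) l = F.σ (if l = q then q + 2 else l) :=
      fun l => by by_cases hl : l = q <;> simp [hl]
    rw [key, key] at h
    have := F.σ_inj _ _ (by split_ifs <;> omega) (by split_ifs <;> omega)
      (by split_ifs <;> omega) (by split_ifs <;> omega) h
    split_ifs at this <;> omega
  isRetraction := F.isRetraction.comp <| by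
    rw [map_add, F.φ_v q (by omega), F.φ_v (q + 2) le_rfl, F.v_eq q (by omega) (by omega)]
    exact isRetraction_solve (F.ε_ne_zero q (by omega) (by omega))
      (F.solve_v le_rfl (by omega) (by omega) (by omega))
  φ_v i hi := by
    rcases eq_or_ne i q with rfl | hiq
    · rw [Function.update_self, map_neg, AlgHom.comp_apply, F.φ_v _ le_rfl,
        F.solve_v le_rfl (by omega) (by omega) (by omega)]
    · rw [Function.update_of_ne hiq, AlgHom.comp_apply, F.φ_v i (by omega),
        F.solve_v (by omega) (by omega) (by omega) hiq]

theorem sub_contract_v_mem (F : Chain 𝕜 ι (q + 1)) (hq : 1 ≤ q) (j : ℕ) :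
    F.v j - (F.contract hq).v j ∈ (F.contract hq).K := by
  simp only [contract]
  rcases eq_or_ne j q with rfl | hjq
  · rw [Function.update_self, sub_neg_eq_add]
    exact Ideal.mem_sup_right (Ideal.mem_span_singleton_self _)
  · rw [Function.update_of_ne hjq, sub_self]
    exact zero_mem _

theorem chainIdeal_sup_contract (F : Chain 𝕜 ι (q + 1)) (hq : 1 ≤ q) (k : ℕ) :
    chainIdeal F.v k ⊔ (F.contract hq).K = chainIdeal (F.contract hq).v k ⊔ (F.contract hq).K :=
  span_pair_sup_eq_of_sub_mem (F.sub_contract_v_mem hq k) <| by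
    rw [add_sub_add_comm]
    exact add_mem (F.sub_contract_v_mem hq _) (F.sub_contract_v_mem hq _)

theorem iInf_pow_sup_eq_prod_pow_sup (F : Chain 𝕜 ι q) (a : ℕ → ℕ) :
    ⨅ k ∈ Finset.Icc 1 q, (chainIdeal F.v k ^ a k ⊔ F.K) =
      (∏ k ∈ Finset.Icc 1 q, chainIdeal F.v k ^ a k) ⊔ F.K := by
  induction q with
  | zero => simp [Ideal.one_eq_top]
  | succ q ih =>
    rcases Nat.eq_zero_or_pos q with rfl | hq
    · simp
    set J := ∏ k ∈ Finset.Icc 1 q, chainIdeal F.v k ^ a k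
    set u := F.v q + F.v (q + 2)
    set G := F.contract hq
    have hJ : ⨅ k ∈ Finset.Icc 1 q, (chainIdeal F.v k ^ a k ⊔ F.K) = J ⊔ F.K := ih F.restrict
    have hu : RegularMod (J ⊔ F.K) u := by
      rw [← hJ]
      refine regularMod_biInf fun k hk => ?_
      obtain ⟨hk₁, hk⟩ := Finset.mem_Icc.1 hk
      exact F.restrict.regularMod_chainIdeal_pow_sup hk₁ hk
        (retractIdeal_v_add_v_ne_zero (F := F) hk₁ hk) _
    have hv : RegularMod (span {u} ⊔ (J ⊔ F.K)) (F.v (q + 1)) := by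
      have hG : span {u} ⊔ (J ⊔ F.K) =
          ⨅ k ∈ Finset.Icc 1 q, (chainIdeal G.v k ^ a k ⊔ G.K) := by
        rw [ih G, ← prod_pow_sup_eq_of_sup_eq a fun k _ => F.chainIdeal_sup_contract hq k]
        simp only [contract]
        rw [sup_comm, sup_assoc]
      rw [hG]
      refine regularMod_biInf fun k hk => ?_
      obtain ⟨hk₁, hk⟩ := Finset.mem_Icc.1 hk
      have hw := retractIdeal_v_succ_ne_zero (F := G) hk₁ hk
      rw [show G.v (q + 1) = F.v (q + 1) from Function.update_of_ne (by omega) _ _] at hw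
      exact G.regularMod_chainIdeal_pow_sup hk₁ hk hw _
    have hI : chainIdeal F.v (q + 1) = span {u, F.v (q + 1)} := by
      rw [chainIdeal, Set.pair_comm]
      rfl
    rw [← Finset.insert_Icc_right_eq_Icc_add_one (by omega), Finset.iInf_insert,
      Finset.prod_insert (by simp), hI, hJ, span_pair_pow_mul_sup_inf_eq le_sup_right hu hv,
      Ideal.mul_sup, sup_assoc, sup_eq_right.2 (Ideal.mul_le_right : _ * F.K ≤ F.K)]

theorem retractIdeal_v_add_one_ne_zero {F : Chain 𝕜 ι q} (hq : 3 ≤ q) (hk₁ : 1 ≤ k)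
    (hk : k ≤ q) : F.retractIdeal k (F.v q + 1) ≠ 0 := by
  rw [map_add, map_one]
  rcases (show k = q ∨ q = k + 1 ∨ (k ≠ q ∧ k + 1 ≠ q) by omega) with rfl | rfl | ⟨h, h'⟩
  · simp [retractIdeal_v_self hk₁ le_rfl]
  · refine ne_zero_iff.2 ⟨Finsupp.single (F.σ (k - 1)) 1, ?_⟩
    rw [retractIdeal_v_succ hk₁ (by omega), coeff_add, coeff_neg,
      F.coeff_v (by omega) (by omega) (by omega), if_pos rfl, coeff_single_one_one, add_zero,
      neg_ne_zero]
    exact F.ε_ne_zero _ (by omega) (by omega)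
  · refine ne_zero_iff.2 ⟨Finsupp.single (F.σ q) 1, ?_⟩
    rw [retractIdeal_v hk₁ hk (by omega) (Ne.symm h) (by omega), coeff_add,
      F.coeff_v (by omega) (by omega) (by omega), if_pos rfl, coeff_single_one_one, add_zero]
    exact F.ε_ne_zero _ (by omega) (by omega)

noncomputable def ofVars (v : ℕ → MvPolynomial ι 𝕜) (σ : ℕ → ι) (hv₀ : v 0 = 1)
    (hv : ∀ i, 1 ≤ i → i ≤ q + 1 → v i = X (σ i))
    (hσ : ∀ i j, 1 ≤ i → i ≤ q + 1 → 1 ≤ j → j ≤ q + 1 → σ i = σ j → i = j) : Chain 𝕜 ι q where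
  v := v
  σ := σ
  ε := 1
  K := ⊥
  φ := AlgHom.id 𝕜 _
  v_zero := hv₀
  v_eq i hi₁ hi := by rw [hv i hi₁ hi, Pi.one_apply, one_smul]
  ε_ne_zero _ _ _ := one_ne_zero
  σ_inj := hσ
  isRetraction := IsRetraction.bot
  φ_v _ _ := rfl

end Chain

theorem map_prod_chainIdeal_pow_congr {R S : Type*} [CommRing R] [CommRing S]
    {f g : R →+* S} {v : ℕ → R} {m : ℕ} (h : ∀ j ≤ m + 1, f (v j) = g (v j)) (a : ℕ → ℕ) :
    (∏ k ∈ Finset.Icc 1 m, chainIdeal v k ^ a k).map f =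
      (∏ k ∈ Finset.Icc 1 m, chainIdeal v k ^ a k).map g := by
  change Ideal.mapHom f _ = Ideal.mapHom g _
  simp only [map_prod, map_pow]
  refine Finset.prod_congr rfl fun k hk => ?_
  obtain ⟨hk₁, hk⟩ := Finset.mem_Icc.1 hk
  change Ideal.map f _ ^ _ = Ideal.map g _ ^ _
  rw [chainIdeal, Ideal.map_span, Ideal.map_span, Set.image_pair, Set.image_pair, map_add,
    map_add, h k (by omega), h (k - 1) (by omega), h (k + 1) (by omega)]

section PathEnd

variable {𝕜 ι : Type*} [Field 𝕜] [DecidableEq ι] {q : ℕ} {v : ℕ → MvPolynomial ι 𝕜} {σ : ℕ → ι}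

theorem regularMod_X_span_add_one_sup_prod (hq : 1 ≤ q) (hv₀ : v 0 = 1)
    (hv : ∀ i, 1 ≤ i → i ≤ q + 1 → v i = X (σ i))
    (hσ : ∀ i j, 1 ≤ i → i ≤ q + 1 → 1 ≤ j → j ≤ q + 1 → σ i = σ j → i = j) (a : ℕ → ℕ) :
    RegularMod (span {v q + 1} ⊔ ∏ k ∈ Finset.Icc 1 q, chainIdeal v k ^ a k) (v (q + 1)) := by
  let F : Chain 𝕜 ι q := Chain.ofVars v σ hv₀ hv hσ
  set χ := solve (σ q) 1 (1 : MvPolynomial ι 𝕜)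
  set ψ := solve (σ (q + 1)) 1 (0 : MvPolynomial ι 𝕜)
  set J := ∏ k ∈ Finset.Icc 1 (q - 1), chainIdeal v k ^ a k
  have hχ : IsRetraction (span {v q + 1}) χ := by
    have h := isRetraction_solve (i := σ q) (c := (1 : 𝕜)) (r := 1) one_ne_zero (map_one _)
    rwa [one_smul, ← hv q hq (by omega)] at h
  have hψ : IsRetraction (span {v (q + 1)}) ψ := by
    have h := isRetraction_solve (i := σ (q + 1)) (c := (1 : 𝕜)) (r := 0) one_ne_zero (map_zero _)
    rwa [one_smul, add_zero, ← hv (q + 1) (by omega) le_rfl] at h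
  have hψχ : ∀ j ≤ q - 1 + 1, ψ (χ (v j)) = χ (v j) := by
    intro j hj
    rcases eq_or_ne j q with rfl | hjq
    · rw [show χ (v j) = -1 from F.solve_v_self hq (by omega), map_neg, map_one]
    · rw [show χ (v j) = v j from F.solve_v (by omega) hq (by omega) hjq]
      exact F.solve_v (by omega) (by omega) le_rfl (by omega)
  have hJ : span {v q + 1} ⊔ ∏ k ∈ Finset.Icc 1 q, chainIdeal v k ^ a k =
      J ⊔ span {v q + 1} := by
    have hcop : span {v q + 1} ⊔ chainIdeal v q = ⊤ := by
      have h := sub_mem (Ideal.mem_sup_left (Ideal.mem_span_singleton_self (v q + 1)))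
        (Ideal.mem_sup_right (Ideal.subset_span (by simp) : v q ∈ chainIdeal v q))
      rwa [add_sub_cancel_left, ← Ideal.eq_top_iff_one] at h
    have hIcc : Finset.Icc 1 q = insert q (Finset.Icc 1 (q - 1)) := by
      ext; simp only [Finset.mem_Icc, Finset.mem_insert]; omega
    rw [hIcc, Finset.prod_insert (by simp only [Finset.mem_Icc]; omega),
      Ideal.sup_mul_eq_of_coprime_left (Ideal.sup_pow_eq_top hcop), sup_comm]
  rw [hJ]
  refine hχ.regularMod_sup (F.solve_v le_rfl hq (by omega) (by omega)) ?_
  -- the generators of `J.map χ` do not involve `x_{q+1}`, so `ψ` fixes them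
  have hmap : (J.map χ).map ψ = J.map χ := by
    change (J.map (χ : MvPolynomial ι 𝕜 →+* _)).map (ψ : MvPolynomial ι 𝕜 →+* _) = J.map χ
    rw [Ideal.map_map]
    exact map_prod_chainIdeal_pow_congr (fun j hj => hψχ j hj) a
  rw [← hmap]
  refine hψ.regularMod_map ?_ _
  rw [hv (q + 1) (by omega) le_rfl]
  exact isRegular_X.left

theorem iInf_chainIdeal_pow_eq_prod (hq : 3 ≤ q) (hv₀ : v 0 = 1) (hv₁ : v (q + 2) = 1)
    (hv : ∀ i, 1 ≤ i → i ≤ q + 1 → v i = X (σ i))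
    (hσ : ∀ i j, 1 ≤ i → i ≤ q + 1 → 1 ≤ j → j ≤ q + 1 → σ i = σ j → i = j) (a : ℕ → ℕ) :
    ⨅ k ∈ Finset.Icc 1 (q + 1), chainIdeal v k ^ a k =
      ∏ k ∈ Finset.Icc 1 (q + 1), chainIdeal v k ^ a k := by
  let F : Chain 𝕜 ι q := Chain.ofVars v σ hv₀ hv hσ
  set J := ∏ k ∈ Finset.Icc 1 q, chainIdeal v k ^ a k
  have hJ : ⨅ k ∈ Finset.Icc 1 q, chainIdeal v k ^ a k = J := by
    simpa [F, Chain.ofVars] using F.iInf_pow_sup_eq_prod_pow_sup a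
  have hu : RegularMod J (v q + 1) := by
    rw [← hJ]
    refine regularMod_biInf fun k hk => ?_
    obtain ⟨hk₁, hk⟩ := Finset.mem_Icc.1 hk
    simpa [F, Chain.ofVars] using F.regularMod_chainIdeal_pow_sup hk₁ hk
      (Chain.retractIdeal_v_add_one_ne_zero hq hk₁ hk) (a k)
  have hI : chainIdeal v (q + 1) = span {v q + 1, v (q + 1)} := by
    rw [chainIdeal, Set.pair_comm, Nat.add_sub_cancel, hv₁]
  rw [← Finset.insert_Icc_right_eq_Icc_add_one (by omega), Finset.iInf_insert,
    Finset.prod_insert (by simp), hI, hJ]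
  simpa using span_pair_pow_mul_sup_inf_eq bot_le hu
    (regularMod_X_span_add_one_sup_prod (by omega) hv₀ hv hσ a) (a (q + 1))

end PathEnd

end TypeA

open TypeA in
/-- For the linearly oriented Aₙ quiver (n ≥ 4), intersections of powers of the ideals
`I_k = (x_k, f_k)` equal their products, for all exponent tuples. Here `x 0 = x (n+1) = 1`
by convention, so `f 1 = 1 + x 2` and `f n = 1 + x (n-1)`. -/
theorem stmt_16 (n : ℕ) (hn : 4 ≤ n)
    (x : ℕ → MvPolynomial (Fin n) ℚ)
    (hx : ∀ k (h1 : 1 ≤ k) (h2 : k ≤ n), x k = X ⟨k - 1, by omega⟩)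
    (hx0 : x 0 = 1) (hxn : x (n + 1) = 1)
    (f : ℕ → MvPolynomial (Fin n) ℚ)
    (hf : ∀ k, 1 ≤ k → k ≤ n → f k = x (k - 1) + x (k + 1))
    (a : ℕ → ℕ) :
    (⨅ k ∈ Finset.Icc 1 n, (Ideal.span {x k, f k}) ^ a k) =
      ∏ k ∈ Finset.Icc 1 n, (Ideal.span {x k, f k}) ^ a k := by
  obtain ⟨q, rfl⟩ : ∃ q, n = q + 1 := ⟨n - 1, by omega⟩
  have hI : ∀ k ∈ Finset.Icc 1 (q + 1), span {x k, f k} ^ a k = chainIdeal x k ^ a k := by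
    intro k hk
    obtain ⟨hk₁, hk⟩ := Finset.mem_Icc.1 hk
    rw [hf k hk₁ hk, chainIdeal]
  rw [Finset.prod_congr rfl hI, iInf_congr fun k => iInf_congr fun hk => hI k hk]
  refine iInf_chainIdeal_pow_eq_prod (σ := fun i => ⟨(i - 1) % (q + 1), Nat.mod_lt _ q.succ_pos⟩)
    (by omega) hx0 hxn (fun i hi₁ hi => ?_) (fun i j hi₁ hi hj₁ hj h => ?_) a
  · rw [hx i hi₁ hi]
    exact congrArg X (Fin.ext (Nat.mod_eq_of_lt (by omega)).symm)
  · have h' := congrArg Fin.val h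
    simp only [Nat.mod_eq_of_lt (by omega : i - 1 < q + 1),
      Nat.mod_eq_of_lt (by omega : j - 1 < q + 1)] at h'
    omega
end

section
/- Let A be the ℚ-subalgebra of ℚ(x_1, x_2) generated by x_1, x_2, (1+x_2)/x_1, (1+x_1)/x_2 (the type A_2 cluster algebra). Then the group of units of A is exactly ℚ^× (the nonzero constants). -/
open MvPolynomial

noncomputable section ClusterA2Aux

namespace ClusterA2

abbrev Rr : Type := MvPolynomial (Fin 2) ℚ
abbrev Ff : Type := FractionRing Rr

lemma em_inj : Function.Injective (algebraMap Rr Ff) := IsFractionRing.injective Rr Ff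

lemma prime_X0 : Prime (X 0 : Rr) := by
  rw [← MulEquiv.prime_iff (MvPolynomial.finSuccEquiv ℚ 1).toMulEquiv]
  have : (MvPolynomial.finSuccEquiv ℚ 1).toMulEquiv (X 0 : Rr) = Polynomial.X := by
    simp [finSuccEquiv_X_zero]
  rw [this]; exact Polynomial.prime_X

lemma prime_X1 : Prime (X 1 : Rr) := by
  rw [← MulEquiv.prime_iff (MvPolynomial.finSuccEquiv ℚ 1).toMulEquiv]
  have h1 : (1 : Fin 2) = Fin.succ 0 := rfl
  have : (MvPolynomial.finSuccEquiv ℚ 1).toMulEquiv (X 1 : Rr) = Polynomial.C (X 0) := by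
    show (MvPolynomial.finSuccEquiv ℚ 1) (X 1 : Rr) = Polynomial.C (X 0)
    rw [h1, finSuccEquiv_X_succ]
  rw [this, Polynomial.prime_C_iff]
  rw [← MulEquiv.prime_iff (MvPolynomial.finSuccEquiv ℚ 0).toMulEquiv]
  have : (MvPolynomial.finSuccEquiv ℚ 0).toMulEquiv (X 0) = Polynomial.X := by
    simp [finSuccEquiv_X_zero]
  rw [this]; exact Polynomial.prime_X

/-- Not divisible by X 0 check via evaluation X 0 ↦ 0. -/
lemma not_X0_dvd {f : Rr} (h : (aeval ![(0 : Rr), X 1] : Rr →ₐ[ℚ] Rr) f ≠ 0) :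
    ¬ (X 0 : Rr) ∣ f := by
  rintro ⟨g, rfl⟩
  apply h
  simp

lemma not_X0_dvd_X1 : ¬ (X 0 : Rr) ∣ X 1 :=
  not_X0_dvd (by simpa using (MvPolynomial.X_ne_zero (R := ℚ) (1 : Fin 2)))

lemma not_X0_dvd_X0_sub_one : ¬ (X 0 : Rr) ∣ (X 0 - 1) := by
  apply not_X0_dvd
  simp

lemma not_X1_dvd_X0 : ¬ (X 1 : Rr) ∣ X 0 := by
  rintro ⟨g, hg⟩
  have := congrArg (aeval ![(X 0 : Rr), 0] : Rr →ₐ[ℚ] Rr) hg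
  simp at this

/-- Laurent predicate: denominator is a power of x₁x₂. -/
def Lau (f : Ff) : Prop :=
  ∃ (p : Rr) (n : ℕ), f * (algebraMap Rr Ff (X 0 * X 1)) ^ n = algebraMap Rr Ff p

lemma Lau.mul {f g : Ff} (hf : Lau f) (hg : Lau g) : Lau (f * g) := by
  obtain ⟨p1, n1, e1⟩ := hf
  obtain ⟨p2, n2, e2⟩ := hg
  exact ⟨p1 * p2, n1 + n2, by rw [map_mul _ p1 p2, ← e1, ← e2, pow_add]; ring⟩

lemma Lau.add {f g : Ff} (hf : Lau f) (hg : Lau g) : Lau (f + g) := by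
  obtain ⟨p1, n1, e1⟩ := hf
  obtain ⟨p2, n2, e2⟩ := hg
  refine ⟨p1 * (X 0 * X 1) ^ n2 + p2 * (X 0 * X 1) ^ n1, n1 + n2, ?_⟩
  rw [map_add, map_mul _ p1 _, map_mul _ p2 _, map_pow, map_pow, ← e1, ← e2, pow_add]; ring

lemma Lau.ratCast (q : ℚ) : Lau (algebraMap ℚ Ff q) :=
  ⟨C q, 0, by
    rw [pow_zero, mul_one, IsScalarTower.algebraMap_apply ℚ Rr Ff, MvPolynomial.algebraMap_eq]⟩

/-- Good predicate for a "valuation" test map Φ : every element has a representation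
p / q with the X 0 - order of Φ q at most that of Φ p.  -/
def Good (Φ : Rr →ₐ[ℚ] Rr) (f : Ff) : Prop :=
  ∃ (p q : Rr) (k : ℕ) (s : Rr),
    f * algebraMap Rr Ff q = algebraMap Rr Ff p ∧
    (X 0 : Rr) ^ k ∣ Φ p ∧ Φ q = (X 0) ^ k * s ∧ ¬ (X 0 : Rr) ∣ s

lemma Good.mul {Φ : Rr →ₐ[ℚ] Rr} {f g : Ff} (hf : Good Φ f) (hg : Good Φ g) :
    Good Φ (f * g) := by
  obtain ⟨p1, q1, k1, s1, e1, d1, hq1, hs1⟩ := hf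
  obtain ⟨p2, q2, k2, s2, e2, d2, hq2, hs2⟩ := hg
  refine ⟨p1 * p2, q1 * q2, k1 + k2, s1 * s2, ?_, ?_, ?_, ?_⟩
  · rw [map_mul _ p1 p2, map_mul _ q1 q2, ← e1, ← e2]; ring
  · rw [map_mul, pow_add]; exact mul_dvd_mul d1 d2
  · rw [map_mul, hq1, hq2, pow_add]; ring
  · intro h
    rcases prime_X0.dvd_mul.1 h with h | h
    exacts [hs1 h, hs2 h]

lemma Good.add {Φ : Rr →ₐ[ℚ] Rr} {f g : Ff} (hf : Good Φ f) (hg : Good Φ g) :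
    Good Φ (f + g) := by
  obtain ⟨p1, q1, k1, s1, e1, d1, hq1, hs1⟩ := hf
  obtain ⟨p2, q2, k2, s2, e2, d2, hq2, hs2⟩ := hg
  refine ⟨p1 * q2 + p2 * q1, q1 * q2, k1 + k2, s1 * s2, ?_, ?_, ?_, ?_⟩
  · rw [map_add, map_mul _ p1 q2, map_mul _ p2 q1, map_mul _ q1 q2, ← e1, ← e2]; ring
  · rw [map_add, map_mul, map_mul, hq1, hq2]
    refine dvd_add ?_ ?_
    · rw [pow_add]; exact mul_dvd_mul d1 (dvd_mul_right _ _)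
    · rw [pow_add, mul_comm ((X 0 : Rr) ^ k1) _]
      exact mul_dvd_mul d2 (dvd_mul_right _ _)
  · rw [map_mul, hq1, hq2, pow_add]; ring
  · intro h
    rcases prime_X0.dvd_mul.1 h with h | h
    exacts [hs1 h, hs2 h]

lemma Good.ratCast (Φ : Rr →ₐ[ℚ] Rr) (q : ℚ) : Good Φ (algebraMap ℚ Ff q) := by
  refine ⟨C q, 1, 0, 1, ?_, one_dvd _, by simp, ?_⟩
  · rw [map_one, mul_one, IsScalarTower.algebraMap_apply ℚ Rr Ff, MvPolynomial.algebraMap_eq]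
  · exact prime_X0.not_dvd_one

/-- every divisor of a product of powers of two primes is a unit times a monomial in them -/
lemma dvd_mono {x y : Rr} (hx : Prime x) (hy : Prime y) :
    ∀ (n m : ℕ) (p : Rr), p ∣ x ^ n * y ^ m →
      ∃ (c : Rr) (i j : ℕ), IsUnit c ∧ p = c * x ^ i * y ^ j := by
  intro n
  induction n with
  | zero =>
    intro m
    induction m with
    | zero =>
      intro p hp
      rw [pow_zero, pow_zero, mul_one] at hp
      exact ⟨p, 0, 0, isUnit_of_dvd_one hp, by ring⟩
    | succ m ih =>
      intro p hp
      obtain ⟨d, hd⟩ := hp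
      have hyd : y ∣ p * d := by
        rw [← hd, pow_zero, one_mul]
        exact dvd_pow_self y m.succ_ne_zero
      rcases hy.dvd_mul.mp hyd with hyp | hyd2
      · obtain ⟨p2, rfl⟩ := hyp
        have hcc : x ^ 0 * y ^ m = p2 * d := by
          apply mul_left_cancel₀ hy.ne_zero
          rw [show y * (x ^ 0 * y ^ m) = x ^ 0 * y ^ (m + 1) by ring, hd]; ring
        obtain ⟨c, i, j, hcu, hpe⟩ := ih p2 ⟨d, hcc⟩
        exact ⟨c, i, j + 1, hcu, by rw [hpe]; ring⟩
      · obtain ⟨d2, rfl⟩ := hyd2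
        have hcc : x ^ 0 * y ^ m = p * d2 := by
          apply mul_left_cancel₀ hy.ne_zero
          rw [show y * (x ^ 0 * y ^ m) = x ^ 0 * y ^ (m + 1) by ring, hd]; ring
        exact ih p ⟨d2, hcc⟩
  | succ n ih =>
    intro m p hp
    obtain ⟨d, hd⟩ := hp
    have hxd : x ∣ p * d := by
      rw [← hd]
      exact dvd_mul_of_dvd_left (dvd_pow_self x n.succ_ne_zero) _
    rcases hx.dvd_mul.mp hxd with hxp | hxd2
    · obtain ⟨p2, rfl⟩ := hxp
      have hcc : x ^ n * y ^ m = p2 * d := by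
        apply mul_left_cancel₀ hx.ne_zero
        rw [show x * (x ^ n * y ^ m) = x ^ (n + 1) * y ^ m by ring, hd]; ring
      obtain ⟨c, i, j, hcu, hpe⟩ := ih m p2 ⟨d, hcc⟩
      exact ⟨c, i + 1, j, hcu, by rw [hpe]; ring⟩
    · obtain ⟨d2, rfl⟩ := hxd2
      have hcc : x ^ n * y ^ m = p * d2 := by
        apply mul_left_cancel₀ hx.ne_zero
        rw [show x * (x ^ n * y ^ m) = x ^ (n + 1) * y ^ m by ring, hd]; ring
      exact ih m p ⟨d2, hcc⟩

/-- units of ℚ[X₀,X₁] are the nonzero constants -/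
lemma unit_eq_C {c : Rr} (hc : IsUnit c) : ∃ γ : ℚ, γ ≠ 0 ∧ c = C γ := by
  have h1 : IsUnit ((MvPolynomial.finSuccEquiv ℚ 1) c) := hc.map _
  rw [Polynomial.isUnit_iff] at h1
  obtain ⟨r, hru, hr⟩ := h1
  have h2 : IsUnit ((MvPolynomial.finSuccEquiv ℚ 0) r) := hru.map _
  rw [Polynomial.isUnit_iff] at h2
  obtain ⟨r2, hr2u, hr2⟩ := h2
  obtain ⟨γ, hγ⟩ : ∃ γ : ℚ, r2 = C γ := ⟨constantCoeff r2, (MvPolynomial.eq_C_of_isEmpty r2)⟩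
  have key : ∀ (n : ℕ) (δ : ℚ),
      (MvPolynomial.finSuccEquiv ℚ n).symm (Polynomial.C (C δ)) = C δ := by
    intro n δ
    have h := RingHom.congr_fun (MvPolynomial.finSuccEquiv_comp_C_eq_C (R := ℚ) n) δ
    simpa using h
  refine ⟨γ, ?_, ?_⟩
  · rintro rfl
    rw [hγ, map_zero] at hr2u
    exact not_isUnit_zero hr2u
  · have hrC : r = C γ := by
      rw [← (MvPolynomial.finSuccEquiv ℚ 0).symm_apply_apply r, ← hr2, hγ, key]
    rw [← (MvPolynomial.finSuccEquiv ℚ 1).symm_apply_apply c, ← hr, hrC, key]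

lemma key_ineq (Φ : Rr →ₐ[ℚ] Rr) {u : Ff} (hu : Good Φ u)
    {c : ℚ} (hc : c ≠ 0) {a b nn α β : ℕ} {sx sy : Rr}
    (hrep : u * (algebraMap Rr Ff (X 0 * X 1)) ^ nn
      = algebraMap Rr Ff (C c * X 0 ^ a * X 1 ^ b))
    (hX0 : Φ (X 0) = X 0 ^ α * sx) (hX1 : Φ (X 1) = X 0 ^ β * sy)
    (hsx : ¬ (X 0 : Rr) ∣ sx) (hsy : ¬ (X 0 : Rr) ∣ sy) :
    nn * α + nn * β ≤ a * α + b * β := by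
  obtain ⟨p, q, k, s, e, hdvd, hq, hs⟩ := hu
  obtain ⟨e2, he2⟩ := hdvd
  have hR : p * (X 0 * X 1) ^ nn = (C c * X 0 ^ a * X 1 ^ b) * q := by
    apply em_inj
    rw [map_mul _ p _, map_mul _ _ q, map_pow, ← e, ← hrep]
    ring
  by_contra hlt
  push_neg at hlt
  obtain ⟨dk, hd⟩ := Nat.exists_eq_add_of_lt hlt
  have hCc : Φ (C c) = C c := by
    rw [← MvPolynomial.algebraMap_eq, AlgHom.commutes]
  have epow1 : (X 0 : Rr) ^ (k + (a*α + b*β)) * (X 0) ^ (dk+1)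
      = (X 0) ^ k * ((X 0) ^ α) ^ nn * ((X 0) ^ β) ^ nn := by
    rw [← pow_mul, ← pow_mul, ← pow_add, ← pow_add, ← pow_add]
    congr 1
    have h1 : α * nn + β * nn = nn * α + nn * β := by ring
    linarith [hd, h1]
  have epow2 : (X 0 : Rr) ^ (k + (a*α + b*β))
      = (X 0) ^ k * ((X 0) ^ α) ^ a * ((X 0) ^ β) ^ b := by
    rw [← pow_mul, ← pow_mul, ← pow_add, ← pow_add]
    congr 1
    ring
  have main : (X 0 : Rr) ^ (k + (a*α+b*β)) * ((X 0) ^ (dk+1) * (e2 * sx ^ nn * sy ^ nn))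
      = (X 0 : Rr) ^ (k + (a*α+b*β)) * (C c * sx ^ a * sy ^ b * s) := by
    calc (X 0 : Rr) ^ (k + (a*α+b*β)) * ((X 0) ^ (dk+1) * (e2 * sx ^ nn * sy ^ nn))
        = ((X 0 : Rr) ^ (k + (a*α+b*β)) * (X 0) ^ (dk+1)) * (e2 * sx ^ nn * sy ^ nn) := by
          ring
      _ = ((X 0 : Rr) ^ k * ((X 0) ^ α) ^ nn * ((X 0) ^ β) ^ nn)
            * (e2 * sx ^ nn * sy ^ nn) := by rw [epow1]
      _ = ((X 0 : Rr) ^ k * e2) * (((X 0) ^ α * sx) * ((X 0) ^ β * sy)) ^ nn := by ring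
      _ = Φ p * Φ ((X 0 * X 1) ^ nn) := by rw [← he2, map_pow, map_mul, hX0, hX1]
      _ = Φ ((C c * X 0 ^ a * X 1 ^ b) * q) := by rw [← map_mul, hR]
      _ = C c * ((X 0 : Rr) ^ α * sx) ^ a * ((X 0) ^ β * sy) ^ b * ((X 0) ^ k * s) := by
          rw [map_mul, map_mul, map_mul, map_pow, map_pow, hX0, hX1, hq, hCc]
      _ = ((X 0 : Rr) ^ k * ((X 0) ^ α) ^ a * ((X 0) ^ β) ^ b)
            * (C c * sx ^ a * sy ^ b * s) := by ring
      _ = (X 0 : Rr) ^ (k + (a*α+b*β)) * (C c * sx ^ a * sy ^ b * s) := by rw [epow2]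
  have hc2 := mul_left_cancel₀
    (pow_ne_zero _ (MvPolynomial.X_ne_zero (R := ℚ) (0 : Fin 2))) main
  have hCcu : (C c : Rr) ∣ 1 := ⟨C c⁻¹, by rw [← map_mul, mul_inv_cancel₀ hc, map_one]⟩
  have hdvd2 : (X 0 : Rr) ∣ C c * sx ^ a * sy ^ b * s := by
    rw [← hc2]
    exact ⟨(X 0) ^ dk * (e2 * sx ^ nn * sy ^ nn), by ring⟩
  rcases prime_X0.dvd_mul.1 hdvd2 with h | h
  · rcases prime_X0.dvd_mul.1 h with h | h
    · rcases prime_X0.dvd_mul.1 h with h | h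
      · exact prime_X0.not_dvd_one (h.trans hCcu)
      · exact hsx (prime_X0.dvd_of_dvd_pow h)
    · exact hsy (prime_X0.dvd_of_dvd_pow h)
  · exact hs h

def ΦA : Rr →ₐ[ℚ] Rr := aeval ![X 0 * X 1, X 0 - 1]
def ΨA : Rr →ₐ[ℚ] Rr := aeval ![X 0 - 1, X 0 * X 1]

lemma ΦA_X0 : ΦA (X 0) = X 0 ^ 1 * X 1 := by simp [ΦA]
lemma ΦA_X1 : ΦA (X 1) = X 0 ^ 0 * (X 0 - 1) := by simp [ΦA]
lemma ΨA_X0 : ΨA (X 0) = X 0 ^ 0 * (X 0 - 1) := by simp [ΨA]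
lemma ΨA_X1 : ΨA (X 1) = X 0 ^ 1 * X 1 := by simp [ΨA]

lemma hx1ne : algebraMap Rr Ff (X 0) ≠ 0 := by
  rw [map_ne_zero_iff _ em_inj]
  exact MvPolynomial.X_ne_zero _

lemma hx2ne : algebraMap Rr Ff (X 1) ≠ 0 := by
  rw [map_ne_zero_iff _ em_inj]
  exact MvPolynomial.X_ne_zero _

lemma good_g1 (Φ : Rr →ₐ[ℚ] Rr) : Good Φ (algebraMap Rr Ff (X 0)) :=
  ⟨X 0, 1, 0, 1, by rw [map_one, mul_one], one_dvd _, by simp, prime_X0.not_dvd_one⟩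

lemma good_g2 (Φ : Rr →ₐ[ℚ] Rr) : Good Φ (algebraMap Rr Ff (X 1)) :=
  ⟨X 1, 1, 0, 1, by rw [map_one, mul_one], one_dvd _, by simp, prime_X0.not_dvd_one⟩

lemma eq_g3 : (1 + algebraMap Rr Ff (X 1)) / algebraMap Rr Ff (X 0) * algebraMap Rr Ff (X 0)
    = algebraMap Rr Ff (1 + X 1) := by
  rw [map_add, map_one]
  exact div_mul_cancel₀ _ hx1ne

lemma eq_g4 : (1 + algebraMap Rr Ff (X 0)) / algebraMap Rr Ff (X 1) * algebraMap Rr Ff (X 1)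
    = algebraMap Rr Ff (1 + X 0) := by
  rw [map_add, map_one]
  exact div_mul_cancel₀ _ hx2ne

lemma good_ΦA_g3 : Good ΦA ((1 + algebraMap Rr Ff (X 1)) / algebraMap Rr Ff (X 0)) := by
  refine ⟨1 + X 1, X 0, 1, X 1, eq_g3, ⟨1, ?_⟩, ΦA_X0, not_X0_dvd_X1⟩
  rw [map_add, map_one, ΦA_X1]; ring

lemma good_ΦA_g4 : Good ΦA ((1 + algebraMap Rr Ff (X 0)) / algebraMap Rr Ff (X 1)) :=
  ⟨1 + X 0, X 1, 0, X 0 - 1, eq_g4, one_dvd _, ΦA_X1, not_X0_dvd_X0_sub_one⟩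

lemma good_ΨA_g3 : Good ΨA ((1 + algebraMap Rr Ff (X 1)) / algebraMap Rr Ff (X 0)) :=
  ⟨1 + X 1, X 0, 0, X 0 - 1, eq_g3, one_dvd _, ΨA_X0, not_X0_dvd_X0_sub_one⟩

lemma good_ΨA_g4 : Good ΨA ((1 + algebraMap Rr Ff (X 0)) / algebraMap Rr Ff (X 1)) := by
  refine ⟨1 + X 0, X 1, 1, X 1, eq_g4, ⟨1, ?_⟩, ΨA_X1, not_X0_dvd_X1⟩
  rw [map_add, map_one, ΨA_X0]; ring

lemma lau_g3 : Lau ((1 + algebraMap Rr Ff (X 1)) / algebraMap Rr Ff (X 0)) := by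
  refine ⟨(1 + X 1) * X 1, 1, ?_⟩
  rw [pow_one, map_mul _ (1 + X 1) (X 1), ← eq_g3, map_mul]
  ring

lemma lau_g4 : Lau ((1 + algebraMap Rr Ff (X 0)) / algebraMap Rr Ff (X 1)) := by
  refine ⟨(1 + X 0) * X 0, 1, ?_⟩
  rw [pow_one, map_mul _ (1 + X 0) (X 0), ← eq_g4, map_mul]
  ring

abbrev genSet : Set Ff :=
  {algebraMap Rr Ff (X 0), algebraMap Rr Ff (X 1),
   (1 + algebraMap Rr Ff (X 1)) / algebraMap Rr Ff (X 0),
   (1 + algebraMap Rr Ff (X 0)) / algebraMap Rr Ff (X 1)}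

lemma mem_lau {f : Ff} (hf : f ∈ Algebra.adjoin ℚ genSet) : Lau f := by
  induction hf using Algebra.adjoin_induction with
  | mem x hx =>
    simp only [genSet, Set.mem_insert_iff, Set.mem_singleton_iff] at hx
    rcases hx with rfl | rfl | rfl | rfl
    · exact ⟨X 0, 0, by simp⟩
    · exact ⟨X 1, 0, by simp⟩
    · exact lau_g3
    · exact lau_g4
  | algebraMap r => exact Lau.ratCast r
  | add x y hx hy ihx ihy => exact ihx.add ihy
  | mul x y hx hy ihx ihy => exact ihx.mul ihy

lemma mem_good (Φ : Rr →ₐ[ℚ] Rr)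
    (h1 : Good Φ (algebraMap Rr Ff (X 0))) (h2 : Good Φ (algebraMap Rr Ff (X 1)))
    (h3 : Good Φ ((1 + algebraMap Rr Ff (X 1)) / algebraMap Rr Ff (X 0)))
    (h4 : Good Φ ((1 + algebraMap Rr Ff (X 0)) / algebraMap Rr Ff (X 1)))
    {f : Ff} (hf : f ∈ Algebra.adjoin ℚ genSet) : Good Φ f := by
  induction hf using Algebra.adjoin_induction with
  | mem x hx =>
    simp only [genSet, Set.mem_insert_iff, Set.mem_singleton_iff] at hx
    rcases hx with rfl | rfl | rfl | rfl
    exacts [h1, h2, h3, h4]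
  | algebraMap r => exact Good.ratCast Φ r
  | add x y hx hy ihx ihy => exact ihx.add ihy
  | mul x y hx hy ihx ihy => exact ihx.mul ihy

end ClusterA2

open ClusterA2

/-- The units of the type A₂ cluster algebra
`A = ℚ[x₁, x₂, (1+x₂)/x₁, (1+x₁)/x₂] ⊆ ℚ(x₁,x₂)` are exactly the nonzero rational
constants. -/
theorem stmt_18 :
    let R := MvPolynomial (Fin 2) ℚ
    let F := FractionRing R
    let x1 : F := algebraMap R F (X 0)
    let x2 : F := algebraMap R F (X 1)
    let A := Algebra.adjoin ℚ ({x1, x2, (1 + x2) / x1, (1 + x1) / x2} : Set F)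
    ∀ u : A, IsUnit u ↔ ∃ q : ℚ, q ≠ 0 ∧ (u : F) = algebraMap ℚ F q := by
  intro R F x1 x2 A u
  have hD : algebraMap Rr Ff (X 0 * X 1) ≠ 0 := by
    rw [map_ne_zero_iff _ em_inj]
    exact mul_ne_zero (MvPolynomial.X_ne_zero _) (MvPolynomial.X_ne_zero _)
  constructor
  · intro hu
    obtain ⟨v, huv⟩ := hu.exists_right_inv
    have huv' : (u : Ff) * (v : Ff) = 1 := by
      have := congrArg (fun a : A => (a : F)) huv
      simpa using this
    obtain ⟨p, n, hp⟩ := mem_lau u.2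
    obtain ⟨p', m, hp'⟩ := mem_lau v.2
    have hprod : p * p' = (X 0 * X 1) ^ (n + m) := by
      apply em_inj
      rw [map_mul _ p p', map_pow, pow_add, ← hp, ← hp']
      linear_combination ((algebraMap Rr Ff (X 0 * X 1)) ^ n *
        (algebraMap Rr Ff (X 0 * X 1)) ^ m) * huv'
    obtain ⟨c, a, b, hcu, hpe⟩ := dvd_mono prime_X0 prime_X1 (n+m) (n+m) p
      ⟨p', by rw [← mul_pow, ← hprod]⟩
    obtain ⟨c', a', b', hcu', hpe'⟩ := dvd_mono prime_X0 prime_X1 (n+m) (n+m) p'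
      ⟨p, by rw [← mul_pow, ← hprod]; ring⟩
    obtain ⟨γ, hγ0, rfl⟩ := unit_eq_C hcu
    obtain ⟨γ', hγ'0, rfl⟩ := unit_eq_C hcu'
    subst hpe hpe'
    have key1 : n * 1 + n * 0 ≤ a * 1 + b * 0 :=
      key_ineq ΦA (mem_good ΦA (good_g1 ΦA) (good_g2 ΦA) good_ΦA_g3 good_ΦA_g4 u.2)
        hγ0 hp ΦA_X0 ΦA_X1 not_X0_dvd_X1 not_X0_dvd_X0_sub_one
    have key2 : n * 0 + n * 1 ≤ a * 0 + b * 1 :=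
      key_ineq ΨA (mem_good ΨA (good_g1 ΨA) (good_g2 ΨA) good_ΨA_g3 good_ΨA_g4 u.2)
        hγ0 hp ΨA_X0 ΨA_X1 not_X0_dvd_X0_sub_one not_X0_dvd_X1
    have key3 : m * 1 + m * 0 ≤ a' * 1 + b' * 0 :=
      key_ineq ΦA (mem_good ΦA (good_g1 ΦA) (good_g2 ΦA) good_ΦA_g3 good_ΦA_g4 v.2)
        hγ'0 hp' ΦA_X0 ΦA_X1 not_X0_dvd_X1 not_X0_dvd_X0_sub_one
    have key4 : m * 0 + m * 1 ≤ a' * 0 + b' * 1 :=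
      key_ineq ΨA (mem_good ΨA (good_g1 ΨA) (good_g2 ΨA) good_ΨA_g3 good_ΨA_g4 v.2)
        hγ'0 hp' ΨA_X0 ΨA_X1 not_X0_dvd_X0_sub_one not_X0_dvd_X1
    simp only [Nat.mul_one, Nat.mul_zero, Nat.add_zero, Nat.zero_add] at key1 key2 key3 key4
    have h2 : (C γ * C γ' * X 0 ^ (a+a') * X 1 ^ (b+b') : Rr) = X 0 ^ (n+m) * X 1 ^ (n+m) := by
      rw [← mul_pow]
      linear_combination hprod
    have hA : a + a' ≤ n + m := by
      by_contra hgt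
      push_neg at hgt
      obtain ⟨r, hr⟩ := Nat.exists_eq_add_of_lt hgt
      rw [hr] at h2
      have hcan : (X 0 : Rr) ^ (n+m) * (X 1 ^ (n+m))
          = (X 0 : Rr) ^ (n+m) * (C γ * C γ' * X 0 ^ (r+1) * X 1 ^ (b+b')) := by
        linear_combination (-1 : Rr) * h2
      have hthis := mul_left_cancel₀
        (pow_ne_zero (n+m) (MvPolynomial.X_ne_zero (R := ℚ) (0 : Fin 2))) hcan
      have hdvd3 : (X 0 : Rr) ∣ X 1 ^ (n+m) := by
        rw [hthis]
        exact ⟨C γ * C γ' * X 0 ^ r * X 1 ^ (b+b'), by ring⟩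
      exact not_X0_dvd_X1 (prime_X0.dvd_of_dvd_pow hdvd3)
    have hB : b + b' ≤ n + m := by
      by_contra hgt
      push_neg at hgt
      obtain ⟨r, hr⟩ := Nat.exists_eq_add_of_lt hgt
      rw [hr] at h2
      have hcan : (X 1 : Rr) ^ (n+m) * (X 0 ^ (n+m))
          = (X 1 : Rr) ^ (n+m) * (C γ * C γ' * X 1 ^ (r+1) * X 0 ^ (a+a')) := by
        linear_combination (-1 : Rr) * h2
      have hthis := mul_left_cancel₀
        (pow_ne_zero (n+m) (MvPolynomial.X_ne_zero (R := ℚ) (1 : Fin 2))) hcan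
      have hdvd3 : (X 1 : Rr) ∣ X 0 ^ (n+m) := by
        rw [hthis]
        exact ⟨C γ * C γ' * X 1 ^ r * X 0 ^ (a+a'), by ring⟩
      exact not_X1_dvd_X0 (prime_X1.dvd_of_dvd_pow hdvd3)
    have han : a = n := by omega
    have hbn : b = n := by omega
    rw [han, hbn] at hp
    have hu_eq : (u : Ff) = algebraMap Rr Ff (C γ) := by
      have hDn : (algebraMap Rr Ff (X 0 * X 1)) ^ n ≠ 0 := pow_ne_zero _ hD
      apply mul_right_cancel₀ hDn
      rw [hp, ← map_pow, ← map_mul]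
      exact congrArg (algebraMap Rr Ff) (by ring)
    exact ⟨γ, hγ0, by
      rw [hu_eq, ← MvPolynomial.algebraMap_eq, ← IsScalarTower.algebraMap_apply ℚ Rr Ff]⟩
  · rintro ⟨q, hq0, hq⟩
    refine IsUnit.of_mul_eq_one (a := u) ⟨algebraMap ℚ F q⁻¹, A.algebraMap_mem q⁻¹⟩ (Subtype.ext ?_)
    show (u : F) * algebraMap ℚ F q⁻¹ = 1
    rw [hq, ← map_mul, mul_inv_cancel₀ hq0, map_one]
end ClusterA2Aux
end

section
/- Let A be the ℚ-subalgebra of ℚ(x_1, x_2) generated by x_1, x_2, (1+x_2)/x_1, (1+x_1)/x_2 (the type A_2 cluster algebra). Then A is a unique factorization domain. -/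
/-!
Write `R = k[x₁, x₂]` (the variables are `X 0`, `X 1` below) and `A` for the cluster algebra.
Membership in `A` is governed by two valuations of `R`: `ord 0 P` and `ord 1 P` are the orders of
vanishing of `P` at the points `p₁ = (0, -1)` and `p₂ = (-1, 0)`, read off on a chart of the
blow-up of that point. A fraction `P / (x₁^a x₂^b)` lies in `A` iff `a ≤ ord 0 P` and
`b ≤ ord 1 P`: the generators have this property and it is stable under sums and products;
conversely such a `P` lies in `I₁^a ∩ I₂^b = I₁^a I₂^b`, where `I₁ = (x₁, 1 + x₂)` and
`I₂ = (x₂, 1 + x₁)` are the maximal ideals of `p₁`, `p₂`, and `I_i ⊆ x_i A`.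

With this description, `x₁` and `x₂` are prime in `A`, and so is
`π / (x₁^(ord 0 π) x₂^(ord 1 π))` for every prime `π` of `R` not associated to `x₁` or `x₂`.
Contracting a nonzero prime ideal of `A` to the factorial ring `R` shows that it contains one of
these primes, so `A` is factorial by Kaplansky's criterion.
-/

open MvPolynomial

noncomputable section

namespace ClusterA2

variable {k : Type*} [Field k]

local notation "R₂" => MvPolynomial (Fin 2) k
local notation "K₂" => FractionRing (MvPolynomial (Fin 2) k)

lemma Fin.two_eq_or_eq {i j : Fin 2} (hij : i ≠ j) (l : Fin 2) : l = i ∨ l = j := by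
  fin_cases i <;> fin_cases j <;> fin_cases l <;> simp_all

lemma Fin.univ_eq_pair {i j : Fin 2} (hij : i ≠ j) : (Finset.univ : Finset (Fin 2)) = {i, j} := by
  ext l
  simpa using Fin.two_eq_or_eq hij l

section Blowup

variable {i j : Fin 2}

/-- The chart `(x_i, x_j) ↦ (x_i, x_i x_j - 1)` of the blow-up of the point `x_i = 0, x_j = -1`
(here `j` is the index other than `i`); the power of `X i` dividing `blowup i P` is the order of
vanishing of `P` at that point. -/
def blowup (i : Fin 2) : R₂ →ₐ[k] R₂ :=
  aeval fun l => if l = i then X i else X i * X l - 1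

def shear (i j : Fin 2) : R₂ →ₐ[k] R₂ :=
  aeval fun l => if l = j then X i * X j else X l

def shift (j : Fin 2) (c : k) : R₂ →ₐ[k] R₂ :=
  aeval fun l => if l = j then X j + C c else X l

@[simp] lemma blowup_X_self (i : Fin 2) : blowup i (X i : R₂) = X i := by
  simp [blowup]

lemma blowup_X_of_ne (hij : i ≠ j) : blowup i (X j : R₂) = X i * X j - 1 := by
  simp [blowup, hij.symm]

lemma blowup_eq_shear_comp_shift (hij : i ≠ j) :
    blowup i = (shear i j).comp (shift j (-1) : R₂ →ₐ[k] _) := by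
  refine algHom_ext fun l => ?_
  rcases Fin.two_eq_or_eq hij l with rfl | rfl
  · simp [blowup, shear, shift, hij]
  · simp [blowup, shear, shift, hij.symm, sub_eq_add_neg]

lemma shift_shift_neg (j : Fin 2) (c : k) (P : R₂) :
    shift j c (shift j (-c) P) = P := by
  have : (shift j c).comp (shift j (-c)) = AlgHom.id k R₂ :=
    algHom_ext fun l => by by_cases hl : l = j <;> simp [shift, hl]
  exact AlgHom.congr_fun this P

lemma monomial_eq_C_mul_X_pow_mul_X_pow (hij : i ≠ j) (t : Fin 2 →₀ ℕ) (c : k) :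
    (monomial t c : R₂) = C c * X i ^ t i * X j ^ t j := by
  rw [monomial_eq, Finsupp.prod_fintype _ _ fun _ => pow_zero _, Fin.prod_univ_two]
  fin_cases i <;> fin_cases j
  all_goals first | exact absurd rfl hij | simp only [Fin.zero_eta, Fin.mk_one]; ring

lemma shear_monomial (hij : i ≠ j) (t : Fin 2 →₀ ℕ) (c : k) :
    shear i j (monomial t c) = monomial (t + Finsupp.single i (t j)) c := by
  rw [monomial_eq_C_mul_X_pow_mul_X_pow hij, monomial_eq_C_mul_X_pow_mul_X_pow hij]
  simp [shear, hij, hij.symm]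
  ring

lemma coeff_shear (hij : i ≠ j) (Q : R₂) (t : Fin 2 →₀ ℕ) :
    coeff (t + Finsupp.single i (t j)) (shear i j Q) = coeff t Q := by
  classical
  have hinj : ∀ u : Fin 2 →₀ ℕ,
      u + Finsupp.single i (u j) = t + Finsupp.single i (t j) → u = t := by
    intro u h
    have hj : u j = t j := by simpa [Finsupp.single_apply, hij] using congrArg (· j) h
    have hi : u i = t i := by simpa [hj] using congrArg (· i) h
    ext l
    rcases Fin.two_eq_or_eq hij l with rfl | rfl
    · exact hi
    · exact hj
  induction Q using MvPolynomial.induction_on' with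
  | monomial u c =>
    rw [shear_monomial hij, coeff_monomial, coeff_monomial]
    exact if_congr ⟨hinj u, fun h => h ▸ rfl⟩ rfl rfl
  | add P Q hP hQ => simp only [map_add, coeff_add, hP, hQ]

lemma blowup_injective (i : Fin 2) :
    Function.Injective (blowup i : R₂ → R₂) := by
  obtain ⟨j, hji⟩ := exists_ne i
  rw [injective_iff_map_eq_zero]
  intro P hP
  rw [blowup_eq_shear_comp_shift hji.symm] at hP
  have hshift : shift j (-1) P = 0 := by
    ext t
    rw [← coeff_shear hji.symm]
    simpa using congrArg (coeff (t + Finsupp.single i (t j))) hP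
  rw [← shift_shift_neg j 1 P, hshift, map_zero]

lemma le_of_X_pow_dvd_of_mem_support {σ R : Type*} [CommSemiring R] {i : σ} {a : ℕ}
    {W : MvPolynomial σ R} (h : X i ^ a ∣ W) {u : σ →₀ ℕ} (hu : u ∈ W.support) :
    a ≤ u i := by
  classical
  obtain ⟨V, rfl⟩ := h
  rw [X_pow_eq_monomial, mem_support_iff, coeff_monomial_mul'] at hu
  split_ifs at hu with hle
  · simpa using hle i
  · exact absurd rfl hu

def pointIdeal (i j : Fin 2) : Ideal R₂ := Ideal.span {X i, 1 + X j}

lemma mem_pointIdeal_pow_of_X_pow_dvd_blowup (hij : i ≠ j) {a : ℕ} {P : R₂}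
    (h : X i ^ a ∣ blowup i P) : P ∈ pointIdeal i j ^ a := by
  -- `shear i j` maps a monomial of total degree `d` to one of `X i`-degree `d`, injectively, so
  -- every monomial of `Q` has total degree at least `a`.
  set Q := shift j (-1) P
  have hdeg : ∀ t ∈ Q.support, a ≤ t.degree := by
    intro t ht
    have hmem : t + Finsupp.single i (t j) ∈ (shear i j Q).support := by
      rwa [mem_support_iff, coeff_shear hij, ← mem_support_iff]
    rw [blowup_eq_shear_comp_shift hij] at h
    have := le_of_X_pow_dvd_of_mem_support h hmem
    rw [Finsupp.degree_eq_sum, Fin.univ_eq_pair hij, Finset.sum_pair hij]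
    simpa using this
  have hQ : Q ∈ idealOfVars (Fin 2) k ^ a := (mem_pow_idealOfVars_iff a Q).2 hdeg
  have hle : (idealOfVars (Fin 2) k).map (shift j 1) ≤ pointIdeal i j := by
    rw [Ideal.map_span, Ideal.span_le]
    rintro _ ⟨_, ⟨l, rfl⟩, rfl⟩
    rcases Fin.two_eq_or_eq hij l with rfl | rfl
    · exact Ideal.subset_span (by simp [shift, hij])
    · exact Ideal.subset_span (by simp [shift, add_comm])
  rw [← shift_shift_neg j 1 P]
  exact Ideal.pow_right_mono hle a
    (Ideal.map_pow (shift j (1 : k)) _ a ▸ Ideal.mem_map_of_mem _ hQ)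

lemma pointIdeal_sup_pointIdeal (i j : Fin 2) :
    pointIdeal i j ⊔ pointIdeal j i = (⊤ : Ideal R₂) := by
  rw [Ideal.eq_top_iff_one, show (1 : R₂) = (1 + X j) + -X j by ring]
  exact Submodule.add_mem_sup (Ideal.subset_span (by simp))
    (Ideal.neg_mem_iff _ |>.2 (Ideal.subset_span (by simp)))

end Blowup

section Order

variable {i j : Fin 2} {P Q : MvPolynomial (Fin 2) k}

def ord (i : Fin 2) (P : R₂) : ℕ := multiplicity (X i) (blowup i P)

lemma finiteMultiplicity_blowup (hP : P ≠ 0) : FiniteMultiplicity (X i) (blowup i P) :=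
  .of_not_isUnit X_prime.not_isUnit ((map_ne_zero_iff _ (blowup_injective i)).2 hP)

lemma X_pow_dvd_blowup_iff (hP : P ≠ 0) {a : ℕ} : X i ^ a ∣ blowup i P ↔ a ≤ ord i P :=
  (finiteMultiplicity_blowup hP).pow_dvd_iff_le_multiplicity

lemma ord_mul (hP : P ≠ 0) (hQ : Q ≠ 0) : ord i (P * Q) = ord i P + ord i Q := by
  have h := finiteMultiplicity_blowup (i := i) (mul_ne_zero hP hQ)
  rw [map_mul] at h
  rw [ord, map_mul, multiplicity_mul X_prime h, ord, ord]

lemma ord_pow (hP : P ≠ 0) (n : ℕ) : ord i (P ^ n) = n * ord i P := by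
  rw [ord, map_pow, (finiteMultiplicity_blowup hP).multiplicity_pow X_prime, ord]

lemma ord_X_self (i : Fin 2) : ord i (X i : R₂) = 1 := by
  rw [ord, blowup_X_self, multiplicity_self]

lemma ord_X_of_ne (hij : i ≠ j) : ord i (X j : R₂) = 0 := by
  rw [ord, blowup_X_of_ne hij, multiplicity_eq_zero]
  intro h
  exact X_prime.not_isUnit (isUnit_of_dvd_one ((dvd_sub_right (dvd_mul_right _ _)).1 h))

end Order

section MonomialOf

variable {i j : Fin 2}

def monomialOf (s : Fin 2 → ℕ) : R₂ := ∏ l, X l ^ s l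

lemma monomialOf_add (s t : Fin 2 → ℕ) :
    (monomialOf (s + t) : R₂) = monomialOf s * monomialOf t := by
  simp [monomialOf, pow_add, Finset.prod_mul_distrib]

@[simp] lemma monomialOf_zero : (monomialOf 0 : R₂) = 1 := by
  simp [monomialOf]

lemma monomialOf_single (i : Fin 2) :
    (monomialOf (Pi.single i 1) : R₂) = X i := by
  simp [monomialOf, Pi.single_apply]

lemma monomialOf_ne_zero (s : Fin 2 → ℕ) : (monomialOf s : R₂) ≠ 0 :=
  Finset.prod_ne_zero_iff.2 fun l _ => pow_ne_zero _ (X_ne_zero l)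

lemma monomialOf_eq (hij : i ≠ j) (s : Fin 2 → ℕ) :
    (monomialOf s : R₂) = X i ^ s i * X j ^ s j := by
  rw [monomialOf, Fin.univ_eq_pair hij, Finset.prod_pair hij]

lemma ord_monomialOf (i : Fin 2) (s : Fin 2 → ℕ) :
    ord i (monomialOf s : R₂) = s i := by
  obtain ⟨j, hji⟩ := exists_ne i
  have hX : ∀ l, (X l : R₂) ≠ 0 := X_ne_zero
  rw [monomialOf_eq hji.symm, ord_mul (pow_ne_zero _ (hX i)) (pow_ne_zero _ (hX j)),
    ord_pow (hX i), ord_pow (hX j), ord_X_self, ord_X_of_ne hji.symm]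
  simp

lemma X_pow_dvd_blowup_monomialOf (i : Fin 2) (s : Fin 2 → ℕ) :
    X i ^ s i ∣ blowup i (monomialOf s : R₂) :=
  (X_pow_dvd_blowup_iff (monomialOf_ne_zero s)).2 (ord_monomialOf i s).ge

lemma _root_.Prime.not_dvd_monomialOf {π : R₂} (hπ : Prime π) (hX : ∀ i, ¬π ∣ X i)
    (s : Fin 2 → ℕ) : ¬π ∣ monomialOf s := fun h => by
  obtain ⟨i, -, hi⟩ := (hπ.dvd_finsetProd_iff _).1 h
  exact hX i (hπ.dvd_of_dvd_pow hi)

end MonomialOf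

section Frac

def frac (P : R₂) (s : Fin 2 → ℕ) : K₂ :=
  algebraMap R₂ K₂ P / algebraMap R₂ K₂ (monomialOf s)

lemma algebraMap_monomialOf_ne_zero (s : Fin 2 → ℕ) :
    algebraMap R₂ K₂ (monomialOf s) ≠ 0 :=
  (map_ne_zero_iff _ (IsFractionRing.injective R₂ K₂)).2 (monomialOf_ne_zero s)

@[simp] lemma frac_zero_right (P : R₂) : frac P 0 = algebraMap R₂ K₂ P := by
  simp [frac]

@[simp] lemma frac_eq_zero_iff {P : R₂} {s : Fin 2 → ℕ} : frac P s = 0 ↔ P = 0 := by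
  simp [frac, monomialOf_ne_zero]

lemma frac_mul_frac (P Q : R₂) (s t : Fin 2 → ℕ) :
    frac P s * frac Q t = frac (P * Q) (s + t) := by
  rw [frac, frac, frac, monomialOf_add, map_mul, map_mul, div_mul_div_comm]

lemma frac_add_frac (P Q : R₂) (s t : Fin 2 → ℕ) :
    frac P s + frac Q t = frac (P * monomialOf t + Q * monomialOf s) (s + t) := by
  rw [frac, frac, frac, div_add_div _ _ (algebraMap_monomialOf_ne_zero s)
    (algebraMap_monomialOf_ne_zero t), monomialOf_add]
  simp only [map_add, map_mul]
  ring

lemma frac_eq_frac_iff {P Q : R₂} {s t : Fin 2 → ℕ} :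
    frac P s = frac Q t ↔ P * monomialOf t = Q * monomialOf s := by
  rw [frac, frac, div_eq_div_iff (algebraMap_monomialOf_ne_zero s)
    (algebraMap_monomialOf_ne_zero t), ← map_mul, ← map_mul,
    (IsFractionRing.injective R₂ K₂).eq_iff]

lemma frac_mul_algebraMap_monomialOf (P : R₂) (s : Fin 2 → ℕ) :
    frac P s * algebraMap R₂ K₂ (monomialOf s) = algebraMap R₂ K₂ P :=
  div_mul_cancel₀ _ (algebraMap_monomialOf_ne_zero s)

end Frac

section ClusterAlgebra

variable {i j : Fin 2}

abbrev x (i : Fin 2) : K₂ := algebraMap R₂ K₂ (X i)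

variable (k) in
def clusterAlgebra : Subalgebra k K₂ :=
  Algebra.adjoin k {x 0, x 1, (1 + x 1) / x 0, (1 + x 0) / x 1}

lemma x_mem_clusterAlgebra (i : Fin 2) : x i ∈ clusterAlgebra k :=
  Algebra.subset_adjoin (by fin_cases i <;> simp)

lemma one_add_x_div_x_mem_clusterAlgebra (hij : i ≠ j) : (1 + x j) / x i ∈ clusterAlgebra k :=
  Algebra.subset_adjoin (by fin_cases i <;> fin_cases j <;> simp_all)

def toClusterAlgebra : R₂ →ₐ[k] clusterAlgebra k :=
  aeval fun i => ⟨x i, x_mem_clusterAlgebra i⟩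

@[simp] lemma coe_toClusterAlgebra (P : R₂) :
    (toClusterAlgebra P : K₂) = algebraMap R₂ K₂ P := by
  have : (clusterAlgebra k).val.comp toClusterAlgebra = IsScalarTower.toAlgHom k R₂ K₂ :=
    algHom_ext fun i => by simp [toClusterAlgebra]
  exact AlgHom.congr_fun this P

lemma frac_one_add_X (i j : Fin 2) : frac (1 + X j : R₂) (Pi.single i 1) = (1 + x j) / x i := by
  simp [frac, monomialOf_single]

lemma X_pow_dvd_blowup_one_add_X (hij : i ≠ j) (l : Fin 2) :
    X l ^ (Pi.single i 1 : Fin 2 → ℕ) l ∣ blowup l (1 + X j : R₂) := by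
  rcases Fin.two_eq_or_eq hij l with rfl | rfl
  · rw [Pi.single_eq_same, pow_one, map_add, map_one, blowup_X_of_ne hij, add_sub_cancel]
    exact dvd_mul_right _ _
  · simp [hij.symm]

def admissibleFracs : Subalgebra k K₂ where
  carrier := {f | ∃ P s, (∀ i, X i ^ s i ∣ blowup i P) ∧ f = frac P s}
  mul_mem' := by
    rintro _ _ ⟨P, s, hP, rfl⟩ ⟨Q, t, hQ, rfl⟩
    refine ⟨P * Q, s + t, fun i => ?_, frac_mul_frac P Q s t⟩
    rw [map_mul, Pi.add_apply, pow_add]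
    exact mul_dvd_mul (hP i) (hQ i)
  add_mem' := by
    rintro _ _ ⟨P, s, hP, rfl⟩ ⟨Q, t, hQ, rfl⟩
    refine ⟨P * monomialOf t + Q * monomialOf s, s + t, fun i => ?_, frac_add_frac P Q s t⟩
    rw [map_add, map_mul, map_mul, Pi.add_apply, pow_add]
    refine dvd_add (mul_dvd_mul (hP i) (X_pow_dvd_blowup_monomialOf i t)) ?_
    rw [mul_comm (X i ^ s i)]
    exact mul_dvd_mul (hQ i) (X_pow_dvd_blowup_monomialOf i s)
  algebraMap_mem' c := ⟨C c, 0, by simp, by simp [IsScalarTower.algebraMap_apply k R₂ K₂]⟩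

lemma clusterAlgebra_le_admissibleFracs : clusterAlgebra k ≤ admissibleFracs := by
  refine Algebra.adjoin_le ?_
  rintro _ (rfl | rfl | rfl | rfl)
  · exact ⟨X 0, 0, by simp, by simp⟩
  · exact ⟨X 1, 0, by simp, by simp⟩
  · exact ⟨_, _, X_pow_dvd_blowup_one_add_X zero_ne_one, (frac_one_add_X 0 1).symm⟩
  · exact ⟨_, _, X_pow_dvd_blowup_one_add_X one_ne_zero, (frac_one_add_X 1 0).symm⟩

lemma map_pointIdeal_le (hij : i ≠ j) :
    (pointIdeal i j).map (toClusterAlgebra (k := k)) ≤ Ideal.span {toClusterAlgebra (X i)} := by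
  rw [pointIdeal, Ideal.map_span, Ideal.span_le]
  rintro _ ⟨P, hP | hP, rfl⟩ <;> rw [SetLike.mem_coe, Ideal.mem_span_singleton]
  · rw [hP]
  · rw [Set.mem_singleton_iff.1 hP]
    refine ⟨⟨_, one_add_x_div_x_mem_clusterAlgebra hij⟩, Subtype.ext ?_⟩
    have hx : x i ≠ 0 := (map_ne_zero_iff _ (IsFractionRing.injective R₂ K₂)).2 (X_ne_zero i)
    simp [mul_div_cancel₀ _ hx]

lemma frac_mem_clusterAlgebra_of_X_pow_dvd {P : R₂} {s : Fin 2 → ℕ}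
    (h : ∀ i, X i ^ s i ∣ blowup i P) : frac P s ∈ clusterAlgebra k := by
  have hcop : IsCoprime (pointIdeal 0 1 ^ s 0) (pointIdeal 1 0 ^ s 1 : Ideal R₂) :=
    (Ideal.isCoprime_iff_sup_eq.2 (pointIdeal_sup_pointIdeal 0 1)).pow
  have hP : P ∈ pointIdeal 0 1 ^ s 0 * pointIdeal 1 0 ^ s 1 := by
    rw [Ideal.mul_eq_inf_of_coprime (Ideal.isCoprime_iff_sup_eq.1 hcop)]
    exact ⟨mem_pointIdeal_pow_of_X_pow_dvd_blowup zero_ne_one (h 0),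
      mem_pointIdeal_pow_of_X_pow_dvd_blowup one_ne_zero (h 1)⟩
  obtain ⟨t, ht⟩ : toClusterAlgebra (monomialOf s) ∣ toClusterAlgebra P := by
    rw [← Ideal.mem_span_singleton, monomialOf_eq zero_ne_one, map_mul, map_pow, map_pow,
      ← Ideal.span_singleton_mul_span_singleton, ← Ideal.span_singleton_pow,
      ← Ideal.span_singleton_pow]
    refine Ideal.mul_mono (Ideal.pow_right_mono (map_pointIdeal_le zero_ne_one) _)
      (Ideal.pow_right_mono (map_pointIdeal_le one_ne_zero) _) ?_
    rw [← Ideal.map_pow, ← Ideal.map_pow, ← Ideal.map_mul]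
    exact Ideal.mem_map_of_mem _ hP
  have hft : frac P s = t := by
    rw [frac, div_eq_iff (algebraMap_monomialOf_ne_zero s), ← coe_toClusterAlgebra,
      ← coe_toClusterAlgebra, ht, mul_comm]
    rfl
  exact hft ▸ t.2

theorem mem_clusterAlgebra_iff {f : K₂} :
    f ∈ clusterAlgebra k ↔ ∃ P s, (∀ i, X i ^ s i ∣ blowup i P) ∧ f = frac P s :=
  ⟨fun hf => clusterAlgebra_le_admissibleFracs hf,
    fun ⟨_, _, h, hf⟩ => hf ▸ frac_mem_clusterAlgebra_of_X_pow_dvd h⟩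

lemma frac_mem_clusterAlgebra {P : R₂} {s : Fin 2 → ℕ} (h : ∀ i, s i ≤ ord i P) :
    frac P s ∈ clusterAlgebra k := by
  rcases eq_or_ne P 0 with rfl | hP
  · simp [frac]
  · exact frac_mem_clusterAlgebra_of_X_pow_dvd fun i => (X_pow_dvd_blowup_iff hP).2 (h i)

lemma exists_eq_frac {f : clusterAlgebra k} (hf : f ≠ 0) :
    ∃ P s, P ≠ 0 ∧ (∀ i, s i ≤ ord i P) ∧ (f : K₂) = frac P s := by
  obtain ⟨P, s, h, hfP⟩ := mem_clusterAlgebra_iff.1 f.2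
  have hP : P ≠ 0 := by
    rintro rfl
    rw [frac_eq_zero_iff.2 rfl, ZeroMemClass.coe_eq_zero] at hfP
    exact hf hfP
  exact ⟨P, s, hP, fun i => (X_pow_dvd_blowup_iff hP).1 (h i), hfP⟩

end ClusterAlgebra

section Primes

lemma ord_mul_monomialOf {P : R₂} (hP : P ≠ 0) (i : Fin 2) (s : Fin 2 → ℕ) :
    ord i (P * monomialOf s) = ord i P + s i := by
  rw [ord_mul hP (monomialOf_ne_zero s), ord_monomialOf]

lemma coe_toClusterAlgebra_X (i : Fin 2) :
    ((toClusterAlgebra (X i : R₂) : clusterAlgebra k) : K₂) = frac (X i) 0 := by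
  simp

lemma toClusterAlgebra_X_dvd_of_lt_ord {i : Fin 2} {f : clusterAlgebra k} {P : R₂}
    {s : Fin 2 → ℕ} (hf : (f : K₂) = frac P s) (hs : ∀ l, s l ≤ ord l P)
    (hi : s i < ord i P) :
    toClusterAlgebra (X i) ∣ f := by
  refine ⟨⟨frac P (s + Pi.single i 1), frac_mem_clusterAlgebra fun l => ?_⟩, Subtype.ext ?_⟩
  · rcases eq_or_ne l i with rfl | hl
    · simpa using hi
    · simpa [hl] using hs l
  · rw [Subalgebra.coe_mul, coe_toClusterAlgebra_X, hf, frac_mul_frac, frac_eq_frac_iff,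
      zero_add, monomialOf_add, monomialOf_single]
    ring

lemma not_isUnit_toClusterAlgebra_X (i : Fin 2) : ¬IsUnit (toClusterAlgebra (X i : R₂)) := by
  intro hu
  obtain ⟨v, hv⟩ := hu.exists_right_inv
  obtain ⟨Q, t, hQ, ht, hvQ⟩ := exists_eq_frac (right_ne_zero_of_mul_eq_one hv)
  have key : X i * Q * monomialOf 0 = 1 * monomialOf (0 + t) := by
    rw [← frac_eq_frac_iff, ← frac_mul_frac, ← hvQ, ← coe_toClusterAlgebra_X,
      frac_zero_right, map_one, ← Subalgebra.coe_mul, hv, Subalgebra.coe_one]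
  have hord := congrArg (ord i) key
  rw [monomialOf_zero, mul_one, one_mul, zero_add, ord_mul (X_ne_zero i) hQ, ord_X_self,
    ord_monomialOf] at hord
  linarith [ht i]

theorem prime_toClusterAlgebra_X (i : Fin 2) : Prime (toClusterAlgebra (X i : R₂)) := by
  refine ⟨fun h => X_ne_zero (R := k) i (by simpa using congrArg Subtype.val h),
    not_isUnit_toClusterAlgebra_X i, fun f g ⟨c, hc⟩ => ?_⟩
  rcases eq_or_ne f 0 with rfl | hf
  · exact Or.inl (dvd_zero _)
  rcases eq_or_ne g 0 with rfl | hg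
  · exact Or.inr (dvd_zero _)
  have hc0 : c ≠ 0 := by
    rintro rfl
    exact mul_ne_zero hf hg (by simpa using hc)
  obtain ⟨Pf, a, hPf, ha, hfa⟩ := exists_eq_frac hf
  obtain ⟨Pg, b, hPg, hb, hgb⟩ := exists_eq_frac hg
  obtain ⟨Pc, d, hPc, hd, hcd⟩ := exists_eq_frac hc0
  have key : Pf * Pg * monomialOf (0 + d) = X i * Pc * monomialOf (a + b) := by
    rw [← frac_eq_frac_iff, ← frac_mul_frac, ← frac_mul_frac, ← hfa, ← hgb, ← hcd,
      ← coe_toClusterAlgebra_X, ← Subalgebra.coe_mul, ← Subalgebra.coe_mul, hc]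
  have hord := congrArg (ord i) key
  rw [ord_mul_monomialOf (mul_ne_zero hPf hPg), ord_mul_monomialOf (mul_ne_zero (X_ne_zero i) hPc),
    ord_mul hPf hPg, ord_mul (X_ne_zero i) hPc, ord_X_self, zero_add, Pi.add_apply] at hord
  have hsum : a i + b i < ord i Pf + ord i Pg := by linarith [hd i]
  rcases lt_or_ge (a i) (ord i Pf) with hlt | hge
  · exact Or.inl (toClusterAlgebra_X_dvd_of_lt_ord hfa ha hlt)
  · exact Or.inr (toClusterAlgebra_X_dvd_of_lt_ord hgb hb (by omega))

def reducedFrac (P : R₂) : clusterAlgebra k :=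
  ⟨frac P (ord · P), frac_mem_clusterAlgebra fun _ => le_rfl⟩

lemma toClusterAlgebra_eq_reducedFrac_mul (P : R₂) :
    toClusterAlgebra P = reducedFrac P * toClusterAlgebra (monomialOf (ord · P)) :=
  Subtype.ext (by simp [reducedFrac, frac_mul_algebraMap_monomialOf])

lemma reducedFrac_dvd_of_dvd {π P : R₂} (hP : P ≠ 0) (hπP : π ∣ P) {f : clusterAlgebra k}
    {s : Fin 2 → ℕ} (hf : (f : K₂) = frac P s) (hs : ∀ i, s i ≤ ord i P) :
    reducedFrac π ∣ f := by
  obtain ⟨M, rfl⟩ := hπP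
  have hπ : π ≠ 0 := left_ne_zero_of_mul hP
  have hM : M ≠ 0 := right_ne_zero_of_mul hP
  refine ⟨⟨frac (M * monomialOf (ord · π)) s, frac_mem_clusterAlgebra fun i => ?_⟩,
    Subtype.ext ?_⟩
  · rw [ord_mul_monomialOf hM]
    have := hs i
    rw [ord_mul hπ hM] at this
    omega
  · rw [Subalgebra.coe_mul, hf]
    change frac _ s = frac π _ * frac _ s
    rw [frac_mul_frac, frac_eq_frac_iff, monomialOf_add]
    ring

lemma not_isUnit_reducedFrac {π : R₂} (hπ : Prime π) (hX : ∀ i, ¬π ∣ X i) :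
    ¬IsUnit (reducedFrac π) := by
  intro hu
  obtain ⟨v, hv⟩ := hu.exists_right_inv
  obtain ⟨Q, t, -, -, hvQ⟩ := exists_eq_frac (right_ne_zero_of_mul_eq_one hv)
  have key : π * Q * monomialOf 0 = 1 * monomialOf ((ord · π) + t) := by
    rw [← frac_eq_frac_iff, ← frac_mul_frac, ← hvQ, frac_zero_right, map_one]
    exact congrArg Subtype.val hv
  exact hπ.not_dvd_monomialOf hX _ ⟨Q, by simpa using key.symm⟩

theorem prime_reducedFrac {π : R₂} (hπ : Prime π) (hX : ∀ i, ¬π ∣ X i) :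
    Prime (reducedFrac π) := by
  refine ⟨fun h => hπ.ne_zero (frac_eq_zero_iff.1 (congrArg Subtype.val h)),
    not_isUnit_reducedFrac hπ hX, fun f g ⟨c, hc⟩ => ?_⟩
  rcases eq_or_ne f 0 with rfl | hf
  · exact Or.inl (dvd_zero _)
  rcases eq_or_ne g 0 with rfl | hg
  · exact Or.inr (dvd_zero _)
  have hc0 : c ≠ 0 := by
    rintro rfl
    exact mul_ne_zero hf hg (by simpa using hc)
  obtain ⟨Pf, a, hPf, ha, hfa⟩ := exists_eq_frac hf
  obtain ⟨Pg, b, hPg, hb, hgb⟩ := exists_eq_frac hg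
  obtain ⟨Pc, d, -, -, hcd⟩ := exists_eq_frac hc0
  have key : Pf * Pg * monomialOf ((ord · π) + d) = π * Pc * monomialOf (a + b) := by
    rw [← frac_eq_frac_iff, ← frac_mul_frac, ← frac_mul_frac, ← hfa, ← hgb, ← hcd,
      ← Subalgebra.coe_mul]
    exact congrArg Subtype.val hc
  have hdvd : π ∣ Pf * Pg := by
    have : π ∣ Pf * Pg * monomialOf ((ord · π) + d) :=
      key ▸ (dvd_mul_right π Pc).mul_right _
    exact (hπ.dvd_or_dvd this).resolve_right (hπ.not_dvd_monomialOf hX _)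
  rcases hπ.dvd_or_dvd hdvd with h | h
  · exact Or.inl (reducedFrac_dvd_of_dvd hPf h hfa ha)
  · exact Or.inr (reducedFrac_dvd_of_dvd hPg h hgb hb)

end Primes

variable (k) in
theorem uniqueFactorizationMonoid_clusterAlgebra :
    UniqueFactorizationMonoid (clusterAlgebra k) := by
  refine UniqueFactorizationMonoid.iff_exists_prime_mem_of_isPrime.2 fun 𝔭 h𝔭 hprime => ?_
  by_cases hx : ∃ i, toClusterAlgebra (X i) ∈ 𝔭
  · obtain ⟨i, hi⟩ := hx
    exact ⟨_, hi, prime_toClusterAlgebra_X i⟩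
  simp only [not_exists] at hx
  have hmonomial : ∀ s, toClusterAlgebra (monomialOf s) ∉ 𝔭 := by
    intro s hs
    rw [monomialOf, map_prod, hprime.prod_mem_iff] at hs
    obtain ⟨i, -, hi⟩ := hs
    exact hx i (hprime.mem_of_pow_mem _ (by simpa using hi))
  have hcomap : 𝔭.comap (toClusterAlgebra (k := k)) ≠ ⊥ := by
    obtain ⟨f, hf𝔭, hf⟩ := Submodule.exists_mem_ne_zero_of_ne_bot h𝔭
    obtain ⟨P, s, hP, -, hfP⟩ := exists_eq_frac hf
    have hPf : toClusterAlgebra P = f * toClusterAlgebra (monomialOf s) :=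
      Subtype.ext (by simp [hfP, frac_mul_algebraMap_monomialOf])
    have hPmem : P ∈ 𝔭.comap toClusterAlgebra :=
      Ideal.mem_comap.2 (hPf ▸ 𝔭.mul_mem_right _ hf𝔭)
    exact fun h => hP (by simpa [h] using hPmem)
  obtain ⟨π, hπ𝔭, hπ⟩ := (hprime.comap toClusterAlgebra).exists_mem_prime_of_ne_bot hcomap
  have hπX : ∀ i, ¬π ∣ X i := fun i hi =>
    hx i (Ideal.mem_comap.1 (Ideal.mem_of_dvd _ hi hπ𝔭))
  refine ⟨reducedFrac π, ?_, prime_reducedFrac hπ hπX⟩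
  rw [Ideal.mem_comap, toClusterAlgebra_eq_reducedFrac_mul] at hπ𝔭
  exact (hprime.mem_or_mem hπ𝔭).resolve_right (hmonomial _)

end ClusterA2

end

/-- The type A₂ cluster algebra `A = ℚ[x₁, x₂, (1+x₂)/x₁, (1+x₁)/x₂] ⊆ ℚ(x₁,x₂)` is a
unique factorization domain. -/
theorem stmt_19 :
    let R := MvPolynomial (Fin 2) ℚ
    let F := FractionRing R
    let x1 : F := algebraMap R F (X 0)
    let x2 : F := algebraMap R F (X 1)
    let A := Algebra.adjoin ℚ ({x1, x2, (1 + x2) / x1, (1 + x1) / x2} : Set F)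
    UniqueFactorizationMonoid A := by
  -- Instance search gives `F` the `ℚ`-algebra structure of a characteristic-zero field, while
  -- `clusterAlgebra ℚ` uses the fraction-field one; `ℚ`-algebra structures are unique.
  have h : (DivisionRing.toRatAlgebra : Algebra ℚ (FractionRing (MvPolynomial (Fin 2) ℚ))) =
      OreLocalization.instAlgebra := Subsingleton.elim _ _
  dsimp only
  rw [h]
  exact ClusterA2.uniqueFactorizationMonoid_clusterAlgebra ℚ
end
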